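/- arXiv:1410.1968 — 5 statements merged into one kernel-verified Lean document; each statement's English description precedes it below -/
import Mathlib

section
/- W₁₂ W'₂₃* = W'₂₃* W₁₃ W₁₂ as bounded operators on H⊗H⊗H. -/
/-!
Let `K` be the antiunitary `Ĵ ⊗ J ⊗ J` of `H ⊗ H ⊗ H`; it exists because on elementary tensors it
preserves inner products up to conjugation. Since `(Ĵ ⊗ J) W (Ĵ ⊗ J) = W*` and
`(J ⊗ J) W' (J ⊗ J) = W`, conjugation by `K` sends `W₁₂`, `W'₂₃*`, `W₁₃` to `W₁₂*`, `W₂₃*`, `W₁₃*`.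
Hence `K (W₁₂ W'₂₃*) K = (W₂₃ W₁₂)*` and `K (W'₂₃* W₁₃ W₁₂) K = (W₁₂ W₁₃ W₂₃)*`, which agree by the
pentagonal equation.
-/

open scoped InnerProductSpace ComplexConjugate

namespace LinearIsometry

variable {E F : Type*} [NormedAddCommGroup E] [InnerProductSpace ℂ E]
  [NormedAddCommGroup F] [InnerProductSpace ℂ F]

theorem re_inner_map_map_of_antilinear (K : E →ₗᵢ⋆[ℂ] F) (x y : E) :
    (⟪K x, K y⟫_ℂ).re = (⟪x, y⟫_ℂ).re := by
  simp only [← RCLike.re_to_complex,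
    re_inner_eq_norm_add_mul_self_sub_norm_mul_self_sub_norm_mul_self_div_two, ← map_add,
    K.norm_map]

theorem inner_map_map_of_antilinear (K : E →ₗᵢ⋆[ℂ] F) (x y : E) :
    ⟪K x, K y⟫_ℂ = ⟪y, x⟫_ℂ := by
  -- the imaginary part is the real part against `Complex.I • y`, which `K` conjugates
  have him := K.re_inner_map_map_of_antilinear x (Complex.I • y)
  rw [K.map_smulₛₗ, inner_smul_right, inner_smul_right] at him
  simp only [Complex.conj_I, Complex.neg_re, Complex.mul_re, Complex.I_re, Complex.I_im,
    zero_mul, one_mul, zero_sub, neg_mul, neg_neg] at him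
  rw [← inner_conj_symm (𝕜 := ℂ) y x]
  exact Complex.ext (K.re_inner_map_map_of_antilinear x y) (by rw [him, Complex.conj_im])

end LinearIsometry

section DenseSpan

variable {E F G G' : Type*} [NormedAddCommGroup E] [InnerProductSpace ℂ E]
  [NormedAddCommGroup F] [InnerProductSpace ℂ F] [NormedAddCommGroup G] [InnerProductSpace ℂ G]
  [NormedAddCommGroup G'] [InnerProductSpace ℂ G']

theorem inner_map_map_eq_of_dense_span {S : Set E} {T : Set F}
    (hS : Dense (Submodule.span ℂ S : Set E)) (hT : Dense (Submodule.span ℂ T : Set F))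
    {A : E →L[ℂ] G} {B : F →L[ℂ] G} {A' : E →L[ℂ] G'} {B' : F →L[ℂ] G'}
    (h : ∀ x ∈ S, ∀ y ∈ T, ⟪A x, B y⟫_ℂ = ⟪A' x, B' y⟫_ℂ) (x : E) (y : F) :
    ⟪A x, B y⟫_ℂ = ⟪A' x, B' y⟫_ℂ := by
  have := ContinuousLinearMap.ext_on (f := (innerSL ℂ).bilinearComp A B)
    (g := (innerSL ℂ).bilinearComp A' B') hS fun x hx => ContinuousLinearMap.ext_on hT (h x hx)
  simpa using congr($this x y)

theorem ext_inner_right_of_dense_span {S : Set E} (hS : Dense (Submodule.span ℂ S : Set E))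
    {x y : E} (h : ∀ v ∈ S, ⟪x, v⟫_ℂ = ⟪y, v⟫_ℂ) : x = y := by
  have := ContinuousLinearMap.ext_on (f := innerSL ℂ x) (g := innerSL ℂ y) hS h
  exact ext_inner_right ℂ fun v => by simpa using congr($this v)

theorem exists_antilinear_map_of_inner {ι : Type*} [CompleteSpace F] (v : ι → E) (w : ι → F)
    (hv : Dense (Submodule.span ℂ (Set.range v) : Set E))
    (hw : ∀ i j, ⟪w i, w j⟫_ℂ = ⟪v j, v i⟫_ℂ) :
    ∃ K : E →L⋆[ℂ] F, ∀ i, K (v i) = w i := by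
  let e := Finsupp.linearCombination ℂ v
  let f : (ι →₀ ℂ) →ₗ⋆[ℂ] F :=
    { toFun := fun c => c.sum fun i a => conj a • w i
      map_add' := fun c d => Finsupp.sum_add_index' (by simp) (by simp [add_smul])
      map_smul' := fun a c => by
        simp [Finsupp.sum_smul_index', Finsupp.smul_sum, smul_smul] }
  have hfe : ∀ c d, ⟪f c, f d⟫_ℂ = ⟪e d, e c⟫_ℂ := by
    intro c d
    induction c using Finsupp.induction_linear with
    | zero => simp
    | add c c' hc hc' => simp [hc, hc']
    | single i a =>
      induction d using Finsupp.induction_linear with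
      | zero => simp
      | add d d' hd hd' => simp [hd, hd']
      | single j b =>
        simp [f, e, hw]
        ring
  have hnorm : ∀ c, ‖f c‖ = ‖e c‖ := fun c => by
    rw [norm_eq_sqrt_re_inner (𝕜 := ℂ), norm_eq_sqrt_re_inner (𝕜 := ℂ), hfe]
  have he : DenseRange e := by
    rwa [DenseRange, ← LinearMap.coe_range, Finsupp.range_linearCombination]
  refine ⟨f.extendOfNorm e, fun i => ?_⟩
  have := LinearMap.extendOfNorm_eq he ⟨1, fun c => (one_mul ‖e c‖).symm ▸ (hnorm c).le⟩
    (Finsupp.single i 1)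
  simpa [e, f] using this

end DenseSpan

theorem ContinuousLinearMap.star_apply_eq_of_antiunitary_conj {E : Type*}
    [NormedAddCommGroup E] [InnerProductSpace ℂ E] [CompleteSpace E]
    (K : E →ₗᵢ⋆[ℂ] E) (hK : ∀ x, K (K x) = x)
    {A B : E →L[ℂ] E} (h : ∀ x, A x = K (B (K x))) (x : E) :
    star A x = K (star B (K x)) := by
  refine ext_inner_left ℂ fun v => ?_
  calc ⟪v, star A x⟫_ℂ = ⟪K (B (K v)), K (K x)⟫_ℂ := by
        rw [star_eq_adjoint, adjoint_inner_right, h, hK]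
    _ = ⟪star B (K x), K v⟫_ℂ := by
        rw [K.inner_map_map_of_antilinear, star_eq_adjoint, adjoint_inner_left]
    _ = ⟪v, K (star B (K x))⟫_ℂ := by
        rw [← K.inner_map_map_of_antilinear, hK]

structure IsHilbertTensor {E F G : Type*} [NormedAddCommGroup E] [InnerProductSpace ℂ E]
    [NormedAddCommGroup F] [InnerProductSpace ℂ F] [NormedAddCommGroup G] [InnerProductSpace ℂ G]
    (τ : E →L[ℂ] F →L[ℂ] G) : Prop where
  inner_apply_apply : ∀ a b c d, ⟪τ a b, τ c d⟫_ℂ = ⟪a, c⟫_ℂ * ⟪b, d⟫_ℂ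
  dense_span : Dense (Submodule.span ℂ (Set.range fun p : E × F => τ p.1 p.2) : Set G)

namespace IsHilbertTensor

variable {E F G : Type*} [NormedAddCommGroup E] [InnerProductSpace ℂ E]
  [NormedAddCommGroup F] [InnerProductSpace ℂ F] [NormedAddCommGroup G] [InnerProductSpace ℂ G]
  {τ : E →L[ℂ] F →L[ℂ] G}

theorem star_apply_of_apply_left [CompleteSpace E] [CompleteSpace G] (hτ : IsHilbertTensor τ)
    {A : E →L[ℂ] E} {C : G →L[ℂ] G} (hC : ∀ a b, C (τ a b) = τ (A a) b) (a : E) (b : F) :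
    star C (τ a b) = τ (star A a) b := by
  refine ext_inner_right_of_dense_span hτ.dense_span ?_
  rintro _ ⟨⟨c, d⟩, rfl⟩
  simp only [ContinuousLinearMap.star_eq_adjoint, ContinuousLinearMap.adjoint_inner_left, hC,
    hτ.inner_apply_apply]

theorem star_apply_of_apply_right [CompleteSpace F] [CompleteSpace G] (hτ : IsHilbertTensor τ)
    {B : F →L[ℂ] F} {C : G →L[ℂ] G} (hC : ∀ a b, C (τ a b) = τ a (B b)) (a : E) (b : F) :
    star C (τ a b) = τ a (star B b) := by
  refine ext_inner_right_of_dense_span hτ.dense_span ?_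
  rintro _ ⟨⟨c, d⟩, rfl⟩
  simp only [ContinuousLinearMap.star_eq_adjoint, ContinuousLinearMap.adjoint_inner_left, hC,
    hτ.inner_apply_apply]

theorem star_eq_self_of_apply_left [CompleteSpace E] [CompleteSpace G] (hτ : IsHilbertTensor τ)
    {A : E →L[ℂ] E} (hA : star A = A) {C : G →L[ℂ] G} (hC : ∀ a b, C (τ a b) = τ (A a) b) :
    star C = C := by
  refine ContinuousLinearMap.ext_on hτ.dense_span ?_
  rintro _ ⟨⟨a, b⟩, rfl⟩
  rw [hτ.star_apply_of_apply_left hC, hA, hC]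

theorem star_eq_self_of_apply_swap [CompleteSpace G] {τ : E →L[ℂ] E →L[ℂ] G}
    (hτ : IsHilbertTensor τ) {S : G →L[ℂ] G} (hS : ∀ a b, S (τ a b) = τ b a) : star S = S := by
  refine ContinuousLinearMap.ext_on hτ.dense_span ?_
  rintro _ ⟨⟨a, b⟩, rfl⟩
  refine ext_inner_right_of_dense_span hτ.dense_span ?_
  rintro _ ⟨⟨c, d⟩, rfl⟩
  simp only [ContinuousLinearMap.star_eq_adjoint, ContinuousLinearMap.adjoint_inner_left, hS,
    hτ.inner_apply_apply, mul_comm]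

theorem apply_antilinear_of_apply_left (hτ : IsHilbertTensor τ) {K : G →L⋆[ℂ] G}
    {L : E → E} {J : F → F} (hK : ∀ a b, K (τ a b) = τ (L a) (J b))
    {A A' : E →L[ℂ] E} (hA : ∀ a, A (L a) = L (A' a)) {C C' : G →L[ℂ] G}
    (hC : ∀ a b, C (τ a b) = τ (A a) b) (hC' : ∀ a b, C' (τ a b) = τ (A' a) b) (x : G) :
    C (K x) = K (C' x) := by
  have : C.comp K = K.comp C' := by
    refine ContinuousLinearMap.ext_on hτ.dense_span ?_
    rintro _ ⟨⟨a, b⟩, rfl⟩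
    simp only [ContinuousLinearMap.comp_apply, hK, hC, hC', hA]
  exact congr($this x)

theorem apply_antilinear_of_apply_right (hτ : IsHilbertTensor τ) {K : G →L⋆[ℂ] G}
    {L : E → E} {J : F → F} (hK : ∀ a b, K (τ a b) = τ (L a) (J b))
    {B B' : F →L[ℂ] F} (hB : ∀ b, B (J b) = J (B' b)) {C C' : G →L[ℂ] G}
    (hC : ∀ a b, C (τ a b) = τ a (B b)) (hC' : ∀ a b, C' (τ a b) = τ a (B' b)) (x : G) :
    C (K x) = K (C' x) := by
  have : C.comp K = K.comp C' := by
    refine ContinuousLinearMap.ext_on hτ.dense_span ?_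
    rintro _ ⟨⟨a, b⟩, rfl⟩
    simp only [ContinuousLinearMap.comp_apply, hK, hC, hC', hB]
  exact congr($this x)

end IsHilbertTensor

section TripleTensor

variable {H H₂ H₃ : Type*} [NormedAddCommGroup H] [InnerProductSpace ℂ H]
  [NormedAddCommGroup H₂] [InnerProductSpace ℂ H₂] [NormedAddCommGroup H₃] [InnerProductSpace ℂ H₃]
  {τ : H →L[ℂ] H →L[ℂ] H₂} {m : H₂ →L[ℂ] H →L[ℂ] H₃} {m' : H →L[ℂ] H₂ →L[ℂ] H₃}

theorem IsHilbertTensor.of_dense_span_tensor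
    (hm : ∀ u v c d, ⟪m u c, m v d⟫_ℂ = ⟪u, v⟫_ℂ * ⟪c, d⟫_ℂ)
    (hmdense : Dense (Submodule.span ℂ
      (Set.range fun p : (H × H) × H => m (τ p.1.1 p.1.2) p.2) : Set H₃)) :
    IsHilbertTensor m where
  inner_apply_apply u c v d := hm u v c d
  dense_span := by
    refine hmdense.mono (SetLike.coe_subset_coe.2 (Submodule.span_mono ?_))
    rintro _ ⟨⟨⟨a, b⟩, c⟩, rfl⟩
    exact ⟨(τ a b, c), rfl⟩

theorem IsHilbertTensor.of_assoc (hτ : IsHilbertTensor τ) (hm : IsHilbertTensor m)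
    (hmm' : ∀ a b c, m (τ a b) c = m' a (τ b c))
    (hmdense : Dense (Submodule.span ℂ
      (Set.range fun p : (H × H) × H => m (τ p.1.1 p.1.2) p.2) : Set H₃)) :
    IsHilbertTensor m' where
  inner_apply_apply a v b w := by
    have := inner_map_map_eq_of_dense_span hτ.dense_span hτ.dense_span
      (A := m' a) (B := m' b) (A' := .id ℂ H₂) (B' := ⟪a, b⟫_ℂ • .id ℂ H₂) (by
        rintro _ ⟨⟨p, q⟩, rfl⟩ _ ⟨⟨r, s⟩, rfl⟩
        simp [← hmm', hm.inner_apply_apply, hτ.inner_apply_apply, mul_assoc])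
      v w
    simpa [inner_smul_right] using this
  dense_span := by
    refine hmdense.mono (SetLike.coe_subset_coe.2 (Submodule.span_mono ?_))
    rintro _ ⟨⟨⟨a, b⟩, c⟩, rfl⟩
    exact ⟨(a, τ b c), (hmm' a b c).symm⟩

theorem exists_antilinear_map_tensor_tensor [CompleteSpace H₃] (hτ : IsHilbertTensor τ)
    (hm : IsHilbertTensor m)
    (hmdense : Dense (Submodule.span ℂ
      (Set.range fun p : (H × H) × H => m (τ p.1.1 p.1.2) p.2) : Set H₃))
    (J₁ J₂ J₃ : H →ₗᵢ⋆[ℂ] H) :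
    ∃ K : H₃ →L⋆[ℂ] H₃, ∀ a b c, K (m (τ a b) c) = m (τ (J₁ a) (J₂ b)) (J₃ c) := by
  obtain ⟨K, hK⟩ := exists_antilinear_map_of_inner
    (fun p : (H × H) × H => m (τ p.1.1 p.1.2) p.2)
    (fun p => m (τ (J₁ p.1.1) (J₂ p.1.2)) (J₃ p.2)) hmdense (by
      rintro ⟨⟨a, b⟩, c⟩ ⟨⟨a', b'⟩, c'⟩
      simp only [hm.inner_apply_apply, hτ.inner_apply_apply,
        LinearIsometry.inner_map_map_of_antilinear])
  exact ⟨K, fun a b c => hK ((a, b), c)⟩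

variable {J₁ J₂ J₃ : H →ₗᵢ⋆[ℂ] H} {K : H₃ →L⋆[ℂ] H₃}

theorem antilinear_apply_left (hτ : IsHilbertTensor τ)
    (hK : ∀ a b c, K (m (τ a b) c) = m (τ (J₁ a) (J₂ b)) (J₃ c)) {L : H₂ →ₗᵢ⋆[ℂ] H₂}
    (hL : ∀ a b, L (τ a b) = τ (J₁ a) (J₂ b)) (u : H₂) (c : H) :
    K (m u c) = m (L u) (J₃ c) := by
  have : K.comp (m.flip c) = (m.flip (J₃ c)).comp L.toContinuousLinearMap := by
    refine ContinuousLinearMap.ext_on hτ.dense_span ?_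
    rintro _ ⟨⟨a, b⟩, rfl⟩
    simp [hK, hL]
  simpa using congr($this u)

theorem antilinear_apply_right (hτ : IsHilbertTensor τ)
    (hmm' : ∀ a b c, m (τ a b) c = m' a (τ b c))
    (hK : ∀ a b c, K (m (τ a b) c) = m (τ (J₁ a) (J₂ b)) (J₃ c)) {L : H₂ →ₗᵢ⋆[ℂ] H₂}
    (hL : ∀ b c, L (τ b c) = τ (J₂ b) (J₃ c)) (a : H) (v : H₂) :
    K (m' a v) = m' (J₁ a) (L v) := by
  have : K.comp (m' a) = (m' (J₁ a)).comp L.toContinuousLinearMap := by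
    refine ContinuousLinearMap.ext_on hτ.dense_span ?_
    rintro _ ⟨⟨b, c⟩, rfl⟩
    simp [← hmm', hK, hL]
  simpa using congr($this v)

theorem antilinear_apply_swap_right (hτ : IsHilbertTensor τ)
    (hmm' : ∀ a b c, m (τ a b) c = m' a (τ b c))
    (hK : ∀ a b c, K (m (τ a b) c) = m (τ (J₁ a) (J₂ b)) (J₃ c)) {S : H₃ →L[ℂ] H₃}
    (hS : ∀ a b c, S (m (τ a b) c) = m (τ b a) c) {L : H₂ →ₗᵢ⋆[ℂ] H₂}
    (hL : ∀ a c, L (τ a c) = τ (J₁ a) (J₃ c)) (b : H) (v : H₂) :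
    K (S (m' b v)) = S (m' (J₂ b) (L v)) := by
  have : (K.comp S).comp (m' b) = (S.comp (m' (J₂ b))).comp L.toContinuousLinearMap := by
    refine ContinuousLinearMap.ext_on hτ.dense_span ?_
    rintro _ ⟨⟨a, c⟩, rfl⟩
    simp [← hmm', hK, hS, hL]
  simpa using congr($this v)

theorem antilinear_involutive
    (hmdense : Dense (Submodule.span ℂ
      (Set.range fun p : (H × H) × H => m (τ p.1.1 p.1.2) p.2) : Set H₃))
    (hK : ∀ a b c, K (m (τ a b) c) = m (τ (J₁ a) (J₂ b)) (J₃ c))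
    (h₁ : ∀ x, J₁ (J₁ x) = x) (h₂ : ∀ x, J₂ (J₂ x) = x) (h₃ : ∀ x, J₃ (J₃ x) = x) (x : H₃) :
    K (K x) = x := by
  have : K.comp K = .id ℂ H₃ := by
    refine ContinuousLinearMap.ext_on hmdense ?_
    rintro _ ⟨⟨⟨a, b⟩, c⟩, rfl⟩
    simp [hK, h₁, h₂, h₃]
  simpa using congr($this x)

theorem apply_antilinear_of_swap_conj [CompleteSpace H₂] [CompleteSpace H₃]
    (hτ : IsHilbertTensor τ) (hm' : IsHilbertTensor m')
    (hmm' : ∀ a b c, m (τ a b) c = m' a (τ b c))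
    (hmdense : Dense (Submodule.span ℂ
      (Set.range fun p : (H × H) × H => m (τ p.1.1 p.1.2) p.2) : Set H₃))
    (hK : ∀ a b c, K (m (τ a b) c) = m (τ (J₁ a) (J₂ b)) (J₃ c)) {S : H₃ →L[ℂ] H₃}
    (hS : ∀ a b c, S (m (τ a b) c) = m (τ b a) c) (hS' : star S = S) {L : H₂ →ₗᵢ⋆[ℂ] H₂}
    (hL : ∀ a c, L (τ a c) = τ (J₁ a) (J₃ c)) {B : H₂ →L[ℂ] H₂}
    (hB : ∀ v, B (L v) = L (star B v)) {C : H₃ →L[ℂ] H₃} (hC : ∀ b v, C (m' b v) = m' b (B v))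
    (x : H₃) : (S * C * S) (K x) = K (star (S * C * S) x) := by
  have : (S * C * S).comp K = K.comp (S * star C * S) := by
    refine ContinuousLinearMap.ext_on hmdense ?_
    rintro _ ⟨⟨⟨a, b⟩, c⟩, rfl⟩
    simp only [ContinuousLinearMap.comp_apply, mul_apply_eq_comp]
    rw [hK, hS, hmm', hC, ← hL, hB, ← antilinear_apply_swap_right hτ hmm' hK hS hL, hS, hmm',
      hm'.star_apply_of_apply_right hC]
  rw [star_mul, star_mul, hS', ← mul_assoc]
  exact congr($this x)

end TripleTensor

theorem stmt_0_general
    {H H2 H3 : Type*}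
    [NormedAddCommGroup H] [InnerProductSpace ℂ H]
    [NormedAddCommGroup H2] [InnerProductSpace ℂ H2] [CompleteSpace H2]
    [NormedAddCommGroup H3] [InnerProductSpace ℂ H3] [CompleteSpace H3]
    -- the tensor map H × H → H ⊗ H = H2
    (τ : H →L[ℂ] H →L[ℂ] H2)
    (hτinner : ∀ a b c d : H, (inner ℂ (τ a b) (τ c d) : ℂ) = (inner ℂ a c : ℂ) * (inner ℂ b d : ℂ))
    (hτdense : Dense (Submodule.span ℂ (Set.range fun p : H × H => τ p.1 p.2) : Set H2))
    -- the tensor maps (H ⊗ H) × H → H ⊗ H ⊗ H = H3 and H × (H ⊗ H) → H ⊗ H ⊗ H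
    (m : H2 →L[ℂ] H →L[ℂ] H3)
    (m' : H →L[ℂ] H2 →L[ℂ] H3)
    (hmm' : ∀ a b c : H, m (τ a b) c = m' a (τ b c))
    (hminner : ∀ (u v : H2) (c d : H), (inner ℂ (m u c) (m v d) : ℂ) = (inner ℂ u v : ℂ) * (inner ℂ c d : ℂ))
    (hmdense : Dense (Submodule.span ℂ (Set.range fun p : (H × H) × H => m (τ p.1.1 p.1.2) p.2) : Set H3))
    -- the leg maps T ↦ T₁₂ = T ⊗ 1, T ↦ T₂₃ = 1 ⊗ T, T ↦ T₁₃ = (Σ⊗1)(1⊗T)(Σ⊗1)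
    (leg12 leg23 leg13 : (H2 →L[ℂ] H2) → (H3 →L[ℂ] H3))
    (hleg12 : ∀ (T : H2 →L[ℂ] H2) (u : H2) (c : H), leg12 T (m u c) = m (T u) c)
    (hleg23 : ∀ (T : H2 →L[ℂ] H2) (a : H) (v : H2), leg23 T (m' a v) = m' a (T v))
    -- the flip unitary Σ on H ⊗ H
    (Sg : H2 →L[ℂ] H2)
    (hSg : ∀ a b : H, Sg (τ a b) = τ b a)
    (hleg13 : ∀ T : H2 →L[ℂ] H2, leg13 T = leg12 Sg * leg23 T * leg12 Sg)
    -- the multiplicative unitary W, satisfying the pentagonal equation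
    (W : H2 →L[ℂ] H2)
    (hPent : leg12 W * leg13 W * leg23 W = leg23 W * leg12 W)
    -- J : a conjugate-linear isometric involution of H
    (J : H → H)
    (hJadd : ∀ x y : H, J (x + y) = J x + J y)
    (hJsmul : ∀ (c : ℂ) (x : H), J (c • x) = (starRingEnd ℂ) c • J x)
    (hJnorm : ∀ x : H, ‖J x‖ = ‖x‖)
    (hJinv : ∀ x : H, J (J x) = x)
    -- Jh : a conjugate-linear isometric involution of H
    (Jh : H → H)
    (hJhadd : ∀ x y : H, Jh (x + y) = Jh x + Jh y)
    (hJhsmul : ∀ (c : ℂ) (x : H), Jh (c • x) = (starRingEnd ℂ) c • Jh x)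
    (hJhnorm : ∀ x : H, ‖Jh x‖ = ‖x‖)
    (hJhinv : ∀ x : H, Jh (Jh x) = x)
    -- JJ : the conjugate-linear involution J⊗J of H ⊗ H
    (JJ : H2 → H2)
    (hJJadd : ∀ x y : H2, JJ (x + y) = JJ x + JJ y)
    (hJJsmul : ∀ (c : ℂ) (x : H2), JJ (c • x) = (starRingEnd ℂ) c • JJ x)
    (hJJnorm : ∀ x : H2, ‖JJ x‖ = ‖x‖)
    (hJJinv : ∀ x : H2, JJ (JJ x) = x)
    (hJJtmul : ∀ a b : H, JJ (τ a b) = τ (J a) (J b))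
    -- JhJ : the conjugate-linear involution Ĵ⊗J of H ⊗ H
    (JhJ : H2 → H2)
    (hJhJadd : ∀ x y : H2, JhJ (x + y) = JhJ x + JhJ y)
    (hJhJsmul : ∀ (c : ℂ) (x : H2), JhJ (c • x) = (starRingEnd ℂ) c • JhJ x)
    (hJhJnorm : ∀ x : H2, ‖JhJ x‖ = ‖x‖)
    (hJhJinv : ∀ x : H2, JhJ (JhJ x) = x)
    (hJhJtmul : ∀ a b : H, JhJ (τ a b) = τ (Jh a) (J b))
    -- the assumption W* = (Ĵ⊗J) W (Ĵ⊗J)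
    (hWstar : ∀ x : H2, (star W) x = JhJ (W (JhJ x)))
    -- W' = (J⊗J) W (J⊗J), the commutant multiplicative unitary
    (W' : H2 →L[ℂ] H2)
    (hW' : ∀ x : H2, W' x = JJ (W (JJ x)))
    :
    leg12 W * star (leg23 W') = star (leg23 W') * leg13 W * leg12 W := by
  let Jₗ : H →ₗᵢ⋆[ℂ] H := ⟨⟨⟨J, hJadd⟩, hJsmul⟩, hJnorm⟩
  let Jhₗ : H →ₗᵢ⋆[ℂ] H := ⟨⟨⟨Jh, hJhadd⟩, hJhsmul⟩, hJhnorm⟩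
  let JJₗ : H2 →ₗᵢ⋆[ℂ] H2 := ⟨⟨⟨JJ, hJJadd⟩, hJJsmul⟩, hJJnorm⟩
  let JhJₗ : H2 →ₗᵢ⋆[ℂ] H2 := ⟨⟨⟨JhJ, hJhJadd⟩, hJhJsmul⟩, hJhJnorm⟩
  have hτ : IsHilbertTensor τ := ⟨hτinner, hτdense⟩
  have hm : IsHilbertTensor m := .of_dense_span_tensor hminner hmdense
  have hm' : IsHilbertTensor m' := hτ.of_assoc hm hmm' hmdense
  obtain ⟨K, hK⟩ := exists_antilinear_map_tensor_tensor hτ hm hmdense Jhₗ Jₗ Jₗ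
  have hWJhJ : ∀ u, W (JhJ u) = JhJ (star W u) := fun u => by rw [hWstar, hJhJinv]
  have hW'JJ : ∀ v, (star W') (JJ v) = JJ ((star W) v) := fun v => by
    rw [ContinuousLinearMap.star_apply_eq_of_antiunitary_conj JJₗ hJJinv hW']
    exact congrArg JJ (congrArg (⇑(star W)) (hJJinv v))
  have h12 : ∀ x, leg12 W (K x) = K (star (leg12 W) x) :=
    hm.apply_antilinear_of_apply_left (antilinear_apply_left hτ hK (L := JhJₗ) hJhJtmul) hWJhJ
      (hleg12 W) (hm.star_apply_of_apply_left (hleg12 W))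
  have h23 : ∀ x, star (leg23 W') (K x) = K (star (leg23 W) x) :=
    hm'.apply_antilinear_of_apply_right (antilinear_apply_right hτ hmm' hK (L := JJₗ) hJJtmul)
      hW'JJ (hm'.star_apply_of_apply_right (hleg23 W')) (hm'.star_apply_of_apply_right (hleg23 W))
  have h13 : ∀ x, leg13 W (K x) = K (star (leg13 W) x) := by
    rw [hleg13]
    exact apply_antilinear_of_swap_conj hτ hm' hmm' hmdense hK (fun a b c => by rw [hleg12, hSg])
      (hm.star_eq_self_of_apply_left (hτ.star_eq_self_of_apply_swap hSg) (hleg12 Sg))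
      (L := JhJₗ) hJhJtmul hWJhJ (hleg23 W)
  have hpent : star (leg12 W) * star (leg23 W) =
      star (leg23 W) * star (leg13 W) * star (leg12 W) := by
    simpa only [star_mul, mul_assoc] using congr(star $hPent).symm
  ext x
  obtain ⟨y, rfl⟩ : ∃ y, K y = x := ⟨K x, antilinear_involutive hmdense hK hJhinv hJinv hJinv x⟩
  simp only [mul_apply_eq_comp, h12, h23, h13]
  exact congr(K ($hpent y))

theorem stmt_0
    {H H2 H3 : Type*}
    [NormedAddCommGroup H] [InnerProductSpace ℂ H] [CompleteSpace H]
    [NormedAddCommGroup H2] [InnerProductSpace ℂ H2] [CompleteSpace H2]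
    [NormedAddCommGroup H3] [InnerProductSpace ℂ H3] [CompleteSpace H3]
    -- the tensor map H × H → H ⊗ H = H2
    (τ : H →L[ℂ] H →L[ℂ] H2)
    (hτinner : ∀ a b c d : H, (inner ℂ (τ a b) (τ c d) : ℂ) = (inner ℂ a c : ℂ) * (inner ℂ b d : ℂ))
    (hτdense : Dense (Submodule.span ℂ (Set.range fun p : H × H => τ p.1 p.2) : Set H2))
    -- the tensor maps (H ⊗ H) × H → H ⊗ H ⊗ H = H3 and H × (H ⊗ H) → H ⊗ H ⊗ H
    (m : H2 →L[ℂ] H →L[ℂ] H3)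
    (m' : H →L[ℂ] H2 →L[ℂ] H3)
    (hmm' : ∀ a b c : H, m (τ a b) c = m' a (τ b c))
    (hminner : ∀ (u v : H2) (c d : H), (inner ℂ (m u c) (m v d) : ℂ) = (inner ℂ u v : ℂ) * (inner ℂ c d : ℂ))
    (hmdense : Dense (Submodule.span ℂ (Set.range fun p : (H × H) × H => m (τ p.1.1 p.1.2) p.2) : Set H3))
    -- the leg maps T ↦ T₁₂ = T ⊗ 1, T ↦ T₂₃ = 1 ⊗ T, T ↦ T₁₃ = (Σ⊗1)(1⊗T)(Σ⊗1)
    (leg12 leg23 leg13 : (H2 →L[ℂ] H2) → (H3 →L[ℂ] H3))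
    (hleg12 : ∀ (T : H2 →L[ℂ] H2) (u : H2) (c : H), leg12 T (m u c) = m (T u) c)
    (hleg23 : ∀ (T : H2 →L[ℂ] H2) (a : H) (v : H2), leg23 T (m' a v) = m' a (T v))
    -- the flip unitary Σ on H ⊗ H
    (Sg : H2 →L[ℂ] H2)
    (hSg : ∀ a b : H, Sg (τ a b) = τ b a)
    (hleg13 : ∀ T : H2 →L[ℂ] H2, leg13 T = leg12 Sg * leg23 T * leg12 Sg)
    -- the multiplicative unitary W, satisfying the pentagonal equation
    (W : H2 →L[ℂ] H2)
    (hWl : W * star W = 1) (hWr : star W * W = 1)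
    (hPent : leg12 W * leg13 W * leg23 W = leg23 W * leg12 W)
    -- J : a conjugate-linear isometric involution of H
    (J : H → H)
    (hJadd : ∀ x y : H, J (x + y) = J x + J y)
    (hJsmul : ∀ (c : ℂ) (x : H), J (c • x) = (starRingEnd ℂ) c • J x)
    (hJnorm : ∀ x : H, ‖J x‖ = ‖x‖)
    (hJinv : ∀ x : H, J (J x) = x)
    -- Jh : a conjugate-linear isometric involution of H
    (Jh : H → H)
    (hJhadd : ∀ x y : H, Jh (x + y) = Jh x + Jh y)
    (hJhsmul : ∀ (c : ℂ) (x : H), Jh (c • x) = (starRingEnd ℂ) c • Jh x)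
    (hJhnorm : ∀ x : H, ‖Jh x‖ = ‖x‖)
    (hJhinv : ∀ x : H, Jh (Jh x) = x)
    -- JJ : the conjugate-linear involution J⊗J of H ⊗ H
    (JJ : H2 → H2)
    (hJJadd : ∀ x y : H2, JJ (x + y) = JJ x + JJ y)
    (hJJsmul : ∀ (c : ℂ) (x : H2), JJ (c • x) = (starRingEnd ℂ) c • JJ x)
    (hJJnorm : ∀ x : H2, ‖JJ x‖ = ‖x‖)
    (hJJinv : ∀ x : H2, JJ (JJ x) = x)
    (hJJtmul : ∀ a b : H, JJ (τ a b) = τ (J a) (J b))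
    -- JhJ : the conjugate-linear involution Ĵ⊗J of H ⊗ H
    (JhJ : H2 → H2)
    (hJhJadd : ∀ x y : H2, JhJ (x + y) = JhJ x + JhJ y)
    (hJhJsmul : ∀ (c : ℂ) (x : H2), JhJ (c • x) = (starRingEnd ℂ) c • JhJ x)
    (hJhJnorm : ∀ x : H2, ‖JhJ x‖ = ‖x‖)
    (hJhJinv : ∀ x : H2, JhJ (JhJ x) = x)
    (hJhJtmul : ∀ a b : H, JhJ (τ a b) = τ (Jh a) (J b))
    -- the assumption W* = (Ĵ⊗J) W (Ĵ⊗J)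
    (hWstar : ∀ x : H2, (star W) x = JhJ (W (JhJ x)))
    -- W' = (J⊗J) W (J⊗J), the commutant multiplicative unitary
    (W' : H2 →L[ℂ] H2)
    (hW' : ∀ x : H2, W' x = JJ (W (JJ x)))
    :
    leg12 W * star (leg23 W') = star (leg23 W') * leg13 W * leg12 W :=
  stmt_0_general τ hτinner hτdense m m' hmm' hminner hmdense leg12 leg23 leg13 hleg12 hleg23 Sg hSg
    hleg13 W hPent J hJadd hJsmul hJnorm hJinv Jh hJhadd hJhsmul hJhnorm hJhinv JJ hJJadd hJJsmul
    hJJnorm hJJinv hJJtmul JhJ hJhJadd hJhJsmul hJhJnorm hJhJinv hJhJtmul hWstar W' hW'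
end

section
/- W₂₃ W'₁₂* = W'₁₂* W'₁₃* W₂₃ as bounded operators on H⊗H⊗H. -/
/-!
Put `V := (J ⊗ J)(Ĵ ⊗ J) = JĴ ⊗ 1`, a unitary. The hypothesis `W* = (Ĵ ⊗ J) W (Ĵ ⊗ J)` turns
`W' = (J ⊗ J) W (J ⊗ J)` into `V W* V*`, so `W'* = V W V*`. Since `V` acts on the first leg only,
`W'₁₂* = V₁₂ W₁₂ V₁₂*` and `W'₁₃* = V₁₂ W₁₃ V₁₂*`, while `V₁₂` commutes with `W₂₃`. Hence the claim
is the pentagonal equation conjugated by `V₁₂`.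
-/

open scoped InnerProductSpace

section General

variable {𝕜 E : Type*} [RCLike 𝕜] [NormedAddCommGroup E] [InnerProductSpace 𝕜 E]

theorem eq_of_forall_inner_eq_of_dense_span {s : Set E}
    (hs : Dense (Submodule.span 𝕜 s : Set E)) {x y : E} (h : ∀ v ∈ s, ⟪v, x⟫_𝕜 = ⟪v, y⟫_𝕜) :
    x = y := by
  refine hs.eq_of_inner_right 𝕜 fun v hv => ?_
  induction hv using Submodule.span_induction with
  | mem v hv => exact h v hv
  | zero => simp only [inner_zero_left]
  | add u v _ _ hu hv => rw [inner_add_left, inner_add_left, hu, hv]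
  | smul c v _ hv => rw [inner_smul_left, inner_smul_left, hv]

theorem star_eq_of_forall_inner_eq_of_dense_span [CompleteSpace E] {s : Set E}
    (hs : Dense (Submodule.span 𝕜 s : Set E)) {A B : E →L[𝕜] E}
    (h : ∀ u ∈ s, ∀ v ∈ s, ⟪A u, v⟫_𝕜 = ⟪u, B v⟫_𝕜) : star A = B :=
  ContinuousLinearMap.ext_on hs fun v hv => eq_of_forall_inner_eq_of_dense_span hs fun u hu => by
    rw [ContinuousLinearMap.star_eq_adjoint, ContinuousLinearMap.adjoint_inner_right, h u hu v hv]

end General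

theorem conj_mul_conj {M : Type*} [Monoid M] {p p' : M} (h : p' * p = 1) (x y : M) :
    p * x * p' * (p * y * p') = p * (x * y) * p' := by
  simp only [mul_assoc]
  rw [← mul_assoc p' p, h, one_mul]

def antiunitaryOfInvolutive {E : Type*} [SeminormedAddCommGroup E] [NormedSpace ℂ E] (J : E → E)
    (hadd : ∀ x y, J (x + y) = J x + J y) (hsmul : ∀ (c : ℂ) x, J (c • x) = (starRingEnd ℂ) c • J x)
    (hnorm : ∀ x, ‖J x‖ = ‖x‖) (hinv : ∀ x, J (J x) = x) : E ≃ₗᵢ⋆[ℂ] E where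
  toFun := J
  invFun := J
  map_add' := hadd
  map_smul' := hsmul
  left_inv := hinv
  right_inv := hinv
  norm_map' := hnorm

theorem star_eq_conj_of_antiunitary {E : Type*} [NormedAddCommGroup E] [InnerProductSpace ℂ E]
    [CompleteSpace E] (K K' : E ≃ₗᵢ⋆[ℂ] E) (hK : ∀ x, K (K x) = x) (hK' : ∀ x, K' (K' x) = x)
    {W W' : E →L[ℂ] E} (hW : ∀ x, star W x = K (W (K x))) (hW' : ∀ x, W' x = K' (W (K' x))) :
    star W' = ((K.trans K' : E ≃ₗᵢ[ℂ] E) : E →L[ℂ] E) * W * (K.trans K').symm := by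
  have hsymm : ∀ x, (K.trans K').symm x = K (K' x) := fun x => by
    rw [LinearIsometryEquiv.symm_apply_eq, LinearIsometryEquiv.trans_apply, hK, hK']
  have hconj : W' = ((K.trans K' : E ≃ₗᵢ[ℂ] E) : E →L[ℂ] E) * star W * (K.trans K').symm := by
    ext x
    change W' x = (K.trans K') (star W ((K.trans K').symm x))
    rw [hsymm, hW, hK, LinearIsometryEquiv.trans_apply, hK, hW']
  rw [hconj, star_mul, star_mul, star_star, LinearIsometryEquiv.star_eq_symm,
    LinearIsometryEquiv.star_eq_symm, LinearIsometryEquiv.symm_symm, mul_assoc]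

section Legs

variable {H H2 H3 : Type*}
  [NormedAddCommGroup H] [InnerProductSpace ℂ H]
  [NormedAddCommGroup H2] [InnerProductSpace ℂ H2]
  [NormedAddCommGroup H3] [InnerProductSpace ℂ H3]

/-- `τ`, `m`, `m'` behave like the maps `(a, b) ↦ a ⊗ b`, `(u, c) ↦ u ⊗ c` and `(a, v) ↦ a ⊗ v`
into `H2 = H ⊗ H` and `H3 = H ⊗ H ⊗ H`. -/
structure IsTripleTensor (τ : H →L[ℂ] H →L[ℂ] H2) (m : H2 →L[ℂ] H →L[ℂ] H3)
    (m' : H →L[ℂ] H2 →L[ℂ] H3) : Prop where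
  inner_τ : ∀ a b c d : H, ⟪τ a b, τ c d⟫_ℂ = ⟪a, c⟫_ℂ * ⟪b, d⟫_ℂ
  dense_τ : Dense (Submodule.span ℂ (Set.range fun p : H × H => τ p.1 p.2) : Set H2)
  m_τ : ∀ a b c : H, m (τ a b) c = m' a (τ b c)
  inner_m : ∀ (u v : H2) (c d : H), ⟪m u c, m v d⟫_ℂ = ⟪u, v⟫_ℂ * ⟪c, d⟫_ℂ
  dense_m : Dense (Submodule.span ℂ
    (Set.range fun p : (H × H) × H => m (τ p.1.1 p.1.2) p.2) : Set H3)

abbrev IsLeg12 (m : H2 →L[ℂ] H →L[ℂ] H3) (leg : (H2 →L[ℂ] H2) → H3 →L[ℂ] H3) : Prop :=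
  ∀ (T : H2 →L[ℂ] H2) (u : H2) (c : H), leg T (m u c) = m (T u) c

abbrev IsLeg23 (m' : H →L[ℂ] H2 →L[ℂ] H3) (leg : (H2 →L[ℂ] H2) → H3 →L[ℂ] H3) : Prop :=
  ∀ (T : H2 →L[ℂ] H2) (a : H) (v : H2), leg T (m' a v) = m' a (T v)

namespace IsTripleTensor

open ContinuousLinearMap

variable {τ : H →L[ℂ] H →L[ℂ] H2} {m : H2 →L[ℂ] H →L[ℂ] H3} {m' : H →L[ℂ] H2 →L[ℂ] H3}
  {leg12 leg23 leg13 : (H2 →L[ℂ] H2) → H3 →L[ℂ] H3} {Sg : H2 →L[ℂ] H2}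

theorem ext₂ (hT : IsTripleTensor τ m m') {F : Type*} [NormedAddCommGroup F] [NormedSpace ℂ F]
    {A B : H2 →L[ℂ] F} (h : ∀ a b, A (τ a b) = B (τ a b)) : A = B :=
  ext_on hT.dense_τ <| by rintro _ ⟨⟨a, b⟩, rfl⟩; exact h a b

theorem ext₃ (hT : IsTripleTensor τ m m') {F : Type*} [NormedAddCommGroup F] [NormedSpace ℂ F]
    {A B : H3 →L[ℂ] F} (h : ∀ a b c, A (m (τ a b) c) = B (m (τ a b) c)) : A = B :=
  ext_on hT.dense_m <| by rintro _ ⟨⟨⟨a, b⟩, c⟩, rfl⟩; exact h a b c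

theorem adjoint_m'_comp_m' [CompleteSpace H2] [CompleteSpace H3] (hT : IsTripleTensor τ m m')
    (a p : H) : adjoint (m' a) ∘L m' p = ⟪a, p⟫_ℂ • ContinuousLinearMap.id ℂ H2 :=
  hT.ext₂ fun b c => eq_of_forall_inner_eq_of_dense_span hT.dense_τ <| by
    rintro _ ⟨⟨q, r⟩, rfl⟩
    simp only [comp_apply, adjoint_inner_right, smul_apply, id_apply, inner_smul_right,
      ← hT.m_τ, hT.inner_m, hT.inner_τ]
    ring

theorem inner_m'_m' [CompleteSpace H2] [CompleteSpace H3] (hT : IsTripleTensor τ m m')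
    (a p : H) (v w : H2) : ⟪m' a v, m' p w⟫_ℂ = ⟪a, p⟫_ℂ * ⟪v, w⟫_ℂ := by
  rw [← adjoint_inner_right, ← comp_apply, hT.adjoint_m'_comp_m', smul_apply, id_apply,
    inner_smul_right]

theorem star_leg12 [CompleteSpace H2] [CompleteSpace H3] (hT : IsTripleTensor τ m m')
    (hL : IsLeg12 m leg12) (X : H2 →L[ℂ] H2) : star (leg12 X) = leg12 (star X) :=
  star_eq_of_forall_inner_eq_of_dense_span hT.dense_m <| by
    rintro _ ⟨⟨⟨a, b⟩, c⟩, rfl⟩ _ ⟨⟨⟨p, q⟩, r⟩, rfl⟩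
    rw [hL, hL, hT.inner_m, hT.inner_m, star_eq_adjoint, adjoint_inner_right]

theorem star_leg23 [CompleteSpace H2] [CompleteSpace H3] (hT : IsTripleTensor τ m m')
    (hR : IsLeg23 m' leg23) (X : H2 →L[ℂ] H2) : star (leg23 X) = leg23 (star X) :=
  star_eq_of_forall_inner_eq_of_dense_span hT.dense_m <| by
    rintro _ ⟨⟨⟨a, b⟩, c⟩, rfl⟩ _ ⟨⟨⟨p, q⟩, r⟩, rfl⟩
    dsimp only
    rw [hT.m_τ, hT.m_τ, hR, hR, hT.inner_m'_m', hT.inner_m'_m', star_eq_adjoint,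
      adjoint_inner_right]

theorem leg12_mul (hT : IsTripleTensor τ m m') (hL : IsLeg12 m leg12) (X Y : H2 →L[ℂ] H2) :
    leg12 (X * Y) = leg12 X * leg12 Y :=
  hT.ext₃ fun a b c => by simp only [mul_apply_eq_comp, hL]

theorem leg12_one (hT : IsTripleTensor τ m m') (hL : IsLeg12 m leg12) : leg12 1 = 1 :=
  hT.ext₃ fun a b c => by simp only [one_apply_eq_self, hL]

theorem leg12_mul_eq_one (hT : IsTripleTensor τ m m') (hL : IsLeg12 m leg12)
    {X Y : H2 →L[ℂ] H2} (h : X * Y = 1) : leg12 X * leg12 Y = 1 := by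
  rw [← hT.leg12_mul hL, h, hT.leg12_one hL]

theorem leg23_mul (hT : IsTripleTensor τ m m') (hR : IsLeg23 m' leg23) (X Y : H2 →L[ℂ] H2) :
    leg23 (X * Y) = leg23 X * leg23 Y :=
  hT.ext₃ fun a b c => by simp only [mul_apply_eq_comp, hT.m_τ, hR]

theorem flip_mul_flip (hT : IsTripleTensor τ m m') (hSg : ∀ a b, Sg (τ a b) = τ b a) :
    Sg * Sg = 1 :=
  hT.ext₂ fun a b => by simp only [mul_apply_eq_comp, hSg, one_apply_eq_self]

theorem star_flip [CompleteSpace H2] (hT : IsTripleTensor τ m m')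
    (hSg : ∀ a b, Sg (τ a b) = τ b a) : star Sg = Sg :=
  star_eq_of_forall_inner_eq_of_dense_span hT.dense_τ <| by
    rintro _ ⟨⟨a, b⟩, rfl⟩ _ ⟨⟨p, q⟩, rfl⟩
    rw [hSg, hSg, hT.inner_τ, hT.inner_τ, mul_comm]

theorem leg13_mul (hT : IsTripleTensor τ m m') (hL : IsLeg12 m leg12) (hR : IsLeg23 m' leg23)
    (hSg : ∀ a b, Sg (τ a b) = τ b a) (hleg13 : ∀ T, leg13 T = leg12 Sg * leg23 T * leg12 Sg)
    (X Y : H2 →L[ℂ] H2) : leg13 (X * Y) = leg13 X * leg13 Y := by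
  rw [hleg13, hleg13, hleg13, hT.leg23_mul hR,
    conj_mul_conj (hT.leg12_mul_eq_one hL (hT.flip_mul_flip hSg))]

theorem star_leg13 [CompleteSpace H2] [CompleteSpace H3] (hT : IsTripleTensor τ m m')
    (hL : IsLeg12 m leg12) (hR : IsLeg23 m' leg23) (hSg : ∀ a b, Sg (τ a b) = τ b a)
    (hleg13 : ∀ T, leg13 T = leg12 Sg * leg23 T * leg12 Sg) (X : H2 →L[ℂ] H2) :
    star (leg13 X) = leg13 (star X) := by
  rw [hleg13, hleg13, star_mul, star_mul, hT.star_leg12 hL, hT.star_flip hSg, hT.star_leg23 hR,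
    mul_assoc]

section FirstLeg

variable {A : H2 →L[ℂ] H2} {f : H → H}

theorem leg12_m' (hT : IsTripleTensor τ m m') (hL : IsLeg12 m leg12)
    (hA : ∀ a b, A (τ a b) = τ (f a) b) (a : H) (w : H2) : leg12 A (m' a w) = m' (f a) w := by
  change (leg12 A ∘L m' a) w = _
  congr 1
  exact hT.ext₂ fun b c => by rw [comp_apply, ← hT.m_τ, hL, hA, hT.m_τ]

theorem commute_leg12_leg23 (hT : IsTripleTensor τ m m') (hL : IsLeg12 m leg12)
    (hR : IsLeg23 m' leg23) (hA : ∀ a b, A (τ a b) = τ (f a) b) (X : H2 →L[ℂ] H2) :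
    Commute (leg12 A) (leg23 X) :=
  hT.ext₃ fun a b c => by simp only [mul_apply_eq_comp, hT.m_τ, hR, hT.leg12_m' hL hA]

theorem leg13_eq_leg12 (hT : IsTripleTensor τ m m') (hL : IsLeg12 m leg12)
    (hR : IsLeg23 m' leg23) (hSg : ∀ a b, Sg (τ a b) = τ b a)
    (hleg13 : ∀ T, leg13 T = leg12 Sg * leg23 T * leg12 Sg) (hA : ∀ a b, A (τ a b) = τ (f a) b) :
    leg13 A = leg12 A :=
  (hleg13 A).trans <| hT.ext₃ fun a b c => by
    calc leg12 Sg (leg23 A (leg12 Sg (m (τ a b) c))) = leg12 Sg (m (τ b (f a)) c) := by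
          rw [hL, hSg, hT.m_τ, hR, hA, ← hT.m_τ]
      _ = leg12 A (m (τ a b) c) := by rw [hL, hL, hSg, hA]

end FirstLeg

end IsTripleTensor

end Legs

theorem stmt_1_general
    {H H2 H3 : Type*}
    [NormedAddCommGroup H] [InnerProductSpace ℂ H]
    [NormedAddCommGroup H2] [InnerProductSpace ℂ H2] [CompleteSpace H2]
    [NormedAddCommGroup H3] [InnerProductSpace ℂ H3] [CompleteSpace H3]
    -- the tensor map H × H → H ⊗ H = H2
    (τ : H →L[ℂ] H →L[ℂ] H2)
    (hτinner : ∀ a b c d : H, (inner ℂ (τ a b) (τ c d) : ℂ) = (inner ℂ a c : ℂ) * (inner ℂ b d : ℂ))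
    (hτdense : Dense (Submodule.span ℂ (Set.range fun p : H × H => τ p.1 p.2) : Set H2))
    -- the tensor maps (H ⊗ H) × H → H ⊗ H ⊗ H = H3 and H × (H ⊗ H) → H ⊗ H ⊗ H
    (m : H2 →L[ℂ] H →L[ℂ] H3)
    (m' : H →L[ℂ] H2 →L[ℂ] H3)
    (hmm' : ∀ a b c : H, m (τ a b) c = m' a (τ b c))
    (hminner : ∀ (u v : H2) (c d : H), (inner ℂ (m u c) (m v d) : ℂ) = (inner ℂ u v : ℂ) * (inner ℂ c d : ℂ))
    (hmdense : Dense (Submodule.span ℂ (Set.range fun p : (H × H) × H => m (τ p.1.1 p.1.2) p.2) : Set H3))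
    -- the leg maps T ↦ T₁₂ = T ⊗ 1, T ↦ T₂₃ = 1 ⊗ T, T ↦ T₁₃ = (Σ⊗1)(1⊗T)(Σ⊗1)
    (leg12 leg23 leg13 : (H2 →L[ℂ] H2) → (H3 →L[ℂ] H3))
    (hleg12 : ∀ (T : H2 →L[ℂ] H2) (u : H2) (c : H), leg12 T (m u c) = m (T u) c)
    (hleg23 : ∀ (T : H2 →L[ℂ] H2) (a : H) (v : H2), leg23 T (m' a v) = m' a (T v))
    -- the flip unitary Σ on H ⊗ H
    (Sg : H2 →L[ℂ] H2)
    (hSg : ∀ a b : H, Sg (τ a b) = τ b a)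
    (hleg13 : ∀ T : H2 →L[ℂ] H2, leg13 T = leg12 Sg * leg23 T * leg12 Sg)
    -- the multiplicative unitary W, satisfying the pentagonal equation
    (W : H2 →L[ℂ] H2)
    (hPent : leg12 W * leg13 W * leg23 W = leg23 W * leg12 W)
    -- J : a conjugate-linear isometric involution of H
    (J : H → H)
    (hJinv : ∀ x : H, J (J x) = x)
    -- Jh : a conjugate-linear isometric involution of H
    (Jh : H → H)
    -- JJ : the conjugate-linear involution J⊗J of H ⊗ H
    (JJ : H2 → H2)
    (hJJadd : ∀ x y : H2, JJ (x + y) = JJ x + JJ y)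
    (hJJsmul : ∀ (c : ℂ) (x : H2), JJ (c • x) = (starRingEnd ℂ) c • JJ x)
    (hJJnorm : ∀ x : H2, ‖JJ x‖ = ‖x‖)
    (hJJinv : ∀ x : H2, JJ (JJ x) = x)
    (hJJtmul : ∀ a b : H, JJ (τ a b) = τ (J a) (J b))
    -- JhJ : the conjugate-linear involution Ĵ⊗J of H ⊗ H
    (JhJ : H2 → H2)
    (hJhJadd : ∀ x y : H2, JhJ (x + y) = JhJ x + JhJ y)
    (hJhJsmul : ∀ (c : ℂ) (x : H2), JhJ (c • x) = (starRingEnd ℂ) c • JhJ x)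
    (hJhJnorm : ∀ x : H2, ‖JhJ x‖ = ‖x‖)
    (hJhJinv : ∀ x : H2, JhJ (JhJ x) = x)
    (hJhJtmul : ∀ a b : H, JhJ (τ a b) = τ (Jh a) (J b))
    -- the assumption W* = (Ĵ⊗J) W (Ĵ⊗J)
    (hWstar : ∀ x : H2, (star W) x = JhJ (W (JhJ x)))
    -- W' = (J⊗J) W (J⊗J), the commutant multiplicative unitary
    (W' : H2 →L[ℂ] H2)
    (hW' : ∀ x : H2, W' x = JJ (W (JJ x)))
    :
    leg23 W * star (leg12 W') = star (leg12 W') * star (leg13 W') * leg23 W := by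
  have hT : IsTripleTensor τ m m' := ⟨hτinner, hτdense, hmm', hminner, hmdense⟩
  set V := (antiunitaryOfInvolutive JhJ hJhJadd hJhJsmul hJhJnorm hJhJinv).trans
    (antiunitaryOfInvolutive JJ hJJadd hJJsmul hJJnorm hJJinv)
  have hstarW' : star W' = V * W * V.symm := star_eq_conj_of_antiunitary _ _ hJhJinv hJJinv hWstar hW'
  have hV : ∀ a b, (V : H2 →L[ℂ] H2) (τ a b) = τ (J (Jh a)) b := fun a b => by
    change JJ (JhJ (τ a b)) = _
    rw [hJhJtmul, hJJtmul, hJinv]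
  have hV' : ∀ a b, (V.symm : H2 →L[ℂ] H2) (τ a b) = τ (Jh (J a)) b := fun a b => by
    change JhJ (JJ (τ a b)) = _
    rw [hJJtmul, hJhJtmul, hJinv]
  set P := leg12 V
  set P' := leg12 V.symm
  have hP'P : P' * P = 1 := hT.leg12_mul_eq_one hleg12 (by ext; simp)
  have hPP' : P * P' = 1 := hT.leg12_mul_eq_one hleg12 (by ext; simp)
  have h12 : star (leg12 W') = P * leg12 W * P' := by
    rw [hT.star_leg12 hleg12, hstarW', hT.leg12_mul hleg12, hT.leg12_mul hleg12]
  have h13 : star (leg13 W') = P * leg13 W * P' := by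
    rw [hT.star_leg13 hleg12 hleg23 hSg hleg13, hstarW', hT.leg13_mul hleg12 hleg23 hSg hleg13,
      hT.leg13_mul hleg12 hleg23 hSg hleg13, hT.leg13_eq_leg12 hleg12 hleg23 hSg hleg13 hV,
      hT.leg13_eq_leg12 hleg12 hleg23 hSg hleg13 hV']
  have h23 : leg23 W = P * leg23 W * P' := by
    rw [(hT.commute_leg12_leg23 hleg12 hleg23 hV W).eq, mul_assoc, hPP', mul_one]
  calc leg23 W * star (leg12 W') = P * leg23 W * P' * (P * leg12 W * P') := by rw [← h23, h12]
    _ = P * (leg12 W * leg13 W * leg23 W) * P' := by rw [conj_mul_conj hP'P, hPent]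
    _ = star (leg12 W') * star (leg13 W') * leg23 W := by
        rw [← conj_mul_conj hP'P, ← conj_mul_conj hP'P, ← h12, ← h13, ← h23]

theorem stmt_1
    {H H2 H3 : Type*}
    [NormedAddCommGroup H] [InnerProductSpace ℂ H] [CompleteSpace H]
    [NormedAddCommGroup H2] [InnerProductSpace ℂ H2] [CompleteSpace H2]
    [NormedAddCommGroup H3] [InnerProductSpace ℂ H3] [CompleteSpace H3]
    -- the tensor map H × H → H ⊗ H = H2
    (τ : H →L[ℂ] H →L[ℂ] H2)
    (hτinner : ∀ a b c d : H, (inner ℂ (τ a b) (τ c d) : ℂ) = (inner ℂ a c : ℂ) * (inner ℂ b d : ℂ))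
    (hτdense : Dense (Submodule.span ℂ (Set.range fun p : H × H => τ p.1 p.2) : Set H2))
    -- the tensor maps (H ⊗ H) × H → H ⊗ H ⊗ H = H3 and H × (H ⊗ H) → H ⊗ H ⊗ H
    (m : H2 →L[ℂ] H →L[ℂ] H3)
    (m' : H →L[ℂ] H2 →L[ℂ] H3)
    (hmm' : ∀ a b c : H, m (τ a b) c = m' a (τ b c))
    (hminner : ∀ (u v : H2) (c d : H), (inner ℂ (m u c) (m v d) : ℂ) = (inner ℂ u v : ℂ) * (inner ℂ c d : ℂ))
    (hmdense : Dense (Submodule.span ℂ (Set.range fun p : (H × H) × H => m (τ p.1.1 p.1.2) p.2) : Set H3))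
    -- the leg maps T ↦ T₁₂ = T ⊗ 1, T ↦ T₂₃ = 1 ⊗ T, T ↦ T₁₃ = (Σ⊗1)(1⊗T)(Σ⊗1)
    (leg12 leg23 leg13 : (H2 →L[ℂ] H2) → (H3 →L[ℂ] H3))
    (hleg12 : ∀ (T : H2 →L[ℂ] H2) (u : H2) (c : H), leg12 T (m u c) = m (T u) c)
    (hleg23 : ∀ (T : H2 →L[ℂ] H2) (a : H) (v : H2), leg23 T (m' a v) = m' a (T v))
    -- the flip unitary Σ on H ⊗ H
    (Sg : H2 →L[ℂ] H2)
    (hSg : ∀ a b : H, Sg (τ a b) = τ b a)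
    (hleg13 : ∀ T : H2 →L[ℂ] H2, leg13 T = leg12 Sg * leg23 T * leg12 Sg)
    -- the multiplicative unitary W, satisfying the pentagonal equation
    (W : H2 →L[ℂ] H2)
    (hWl : W * star W = 1) (hWr : star W * W = 1)
    (hPent : leg12 W * leg13 W * leg23 W = leg23 W * leg12 W)
    -- J : a conjugate-linear isometric involution of H
    (J : H → H)
    (hJadd : ∀ x y : H, J (x + y) = J x + J y)
    (hJsmul : ∀ (c : ℂ) (x : H), J (c • x) = (starRingEnd ℂ) c • J x)
    (hJnorm : ∀ x : H, ‖J x‖ = ‖x‖)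
    (hJinv : ∀ x : H, J (J x) = x)
    -- Jh : a conjugate-linear isometric involution of H
    (Jh : H → H)
    (hJhadd : ∀ x y : H, Jh (x + y) = Jh x + Jh y)
    (hJhsmul : ∀ (c : ℂ) (x : H), Jh (c • x) = (starRingEnd ℂ) c • Jh x)
    (hJhnorm : ∀ x : H, ‖Jh x‖ = ‖x‖)
    (hJhinv : ∀ x : H, Jh (Jh x) = x)
    -- JJ : the conjugate-linear involution J⊗J of H ⊗ H
    (JJ : H2 → H2)
    (hJJadd : ∀ x y : H2, JJ (x + y) = JJ x + JJ y)
    (hJJsmul : ∀ (c : ℂ) (x : H2), JJ (c • x) = (starRingEnd ℂ) c • JJ x)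
    (hJJnorm : ∀ x : H2, ‖JJ x‖ = ‖x‖)
    (hJJinv : ∀ x : H2, JJ (JJ x) = x)
    (hJJtmul : ∀ a b : H, JJ (τ a b) = τ (J a) (J b))
    -- JhJ : the conjugate-linear involution Ĵ⊗J of H ⊗ H
    (JhJ : H2 → H2)
    (hJhJadd : ∀ x y : H2, JhJ (x + y) = JhJ x + JhJ y)
    (hJhJsmul : ∀ (c : ℂ) (x : H2), JhJ (c • x) = (starRingEnd ℂ) c • JhJ x)
    (hJhJnorm : ∀ x : H2, ‖JhJ x‖ = ‖x‖)
    (hJhJinv : ∀ x : H2, JhJ (JhJ x) = x)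
    (hJhJtmul : ∀ a b : H, JhJ (τ a b) = τ (Jh a) (J b))
    -- the assumption W* = (Ĵ⊗J) W (Ĵ⊗J)
    (hWstar : ∀ x : H2, (star W) x = JhJ (W (JhJ x)))
    -- W' = (J⊗J) W (J⊗J), the commutant multiplicative unitary
    (W' : H2 →L[ℂ] H2)
    (hW' : ∀ x : H2, W' x = JJ (W (JJ x)))
    :
    leg23 W * star (leg12 W') = star (leg12 W') * star (leg13 W') * leg23 W :=
  stmt_1_general τ hτinner hτdense m m' hmm' hminner hmdense leg12 leg23 leg13 hleg12 hleg23 Sg hSg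
    hleg13 W hPent J hJinv Jh JJ hJJadd hJJsmul hJJnorm hJJinv hJJtmul JhJ hJhJadd hJhJsmul hJhJnorm
    hJhJinv hJhJtmul hWstar W' hW'
end

section
/- W'₁₃ W₂₃ = W'₁₂* W'₂₃ W'₁₂ W'₂₃* W₂₃ as bounded operators on H⊗H⊗H. -/
/-!
Conjugation by the antiunitary `K = J ⊗ J ⊗ J` of `H ⊗ H ⊗ H` carries the legs of `W` to the legs
of `W' = (J ⊗ J) W (J ⊗ J)`, because `K` commutes with `Σ ⊗ 1`; hence `W'` again satisfies the
pentagon equation `W'₁₂ W'₁₃ W'₂₃ = W'₂₃ W'₁₂`. The legs `W'₁₂`, `W'₂₃` of the unitary `W'` are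
unitary, so the pentagon equation can be solved for `W'₁₃ = W'₁₂* W'₂₃ W'₁₂ W'₂₃*`.
-/

noncomputable section

open scoped InnerProductSpace

theorem ContinuousLinearMap.ext_on₂ {𝕜 E F G : Type*} [NontriviallyNormedField 𝕜]
    [NormedAddCommGroup E] [NormedSpace 𝕜 E] [NormedAddCommGroup F] [NormedSpace 𝕜 F]
    [NormedAddCommGroup G] [NormedSpace 𝕜 G] {σ₁₃ σ₂₃ : 𝕜 →+* 𝕜} [RingHomIsometric σ₂₃]
    {s : Set E} {t : Set F} (hs : Dense (Submodule.span 𝕜 s : Set E))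
    (ht : Dense (Submodule.span 𝕜 t : Set F)) {f g : E →SL[σ₁₃] F →SL[σ₂₃] G}
    (h : ∀ x ∈ s, ∀ y ∈ t, f x y = g x y) : f = g :=
  ext_on hs fun x hx => ext_on ht fun y hy => h x hx y hy

theorem Unitary.eq_star_mul_mul_mul_star_of_mul_mul_eq {R : Type*} [Monoid R] [StarMul R]
    {X Y Z : R} (hX : X ∈ unitary R) (hZ : Z ∈ unitary R) (h : X * Y * Z = Z * X) :
    Y = star X * Z * X * star Z :=
  calc Y = star X * X * Y * (Z * star Z) := by
        rw [Unitary.star_mul_self_of_mem hX, Unitary.mul_star_self_of_mem hZ, one_mul, mul_one]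
    _ = star X * (X * Y * Z) * star Z := by simp only [mul_assoc]
    _ = star X * Z * X * star Z := by rw [h, ← mul_assoc (star X)]

section

variable {E F G : Type*} [NormedAddCommGroup E] [InnerProductSpace ℂ E]
  [NormedAddCommGroup F] [InnerProductSpace ℂ F] [NormedAddCommGroup G] [InnerProductSpace ℂ G]

theorem LinearIsometry.inner_map_map_eq_swap (J : E →ₗᵢ⋆[ℂ] F) (x y : E) :
    ⟪J x, J y⟫_ℂ = ⟪y, x⟫_ℂ := by
  have hre : ∀ x y, RCLike.re ⟪J x, J y⟫_ℂ = RCLike.re ⟪y, x⟫_ℂ := fun x y => by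
    rw [re_inner_eq_norm_add_mul_self_sub_norm_mul_self_sub_norm_mul_self_div_two,
      re_inner_eq_norm_add_mul_self_sub_norm_mul_self_sub_norm_mul_self_div_two, ← map_add,
      J.norm_map, J.norm_map, J.norm_map, add_comm x y]
    ring
  apply Complex.ext
  · exact hre x y
  · have := hre x (Complex.I • y)
    rw [J.map_smulₛₗ, inner_smul_right, inner_smul_left] at this
    simpa using this

/-- The conjugate-linear map `l ↦ ∑ conj (l p) • w p` has the same norm as `l ↦ ∑ l p • v p`,
so it factors through the latter and extends by continuity. -/
theorem exists_conjCLM_of_inner_eq [CompleteSpace F] {ι : Type*} {v : ι → E} {w : ι → F}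
    (hv : Dense (Submodule.span ℂ (Set.range v) : Set E))
    (hw : ∀ p q, ⟪w p, w q⟫_ℂ = ⟪v q, v p⟫_ℂ) :
    ∃ K : E →L⋆[ℂ] F, ∀ p, K (v p) = w p := by
  set A := Finsupp.linearCombination ℂ v
  set B : (ι →₀ ℂ) →ₗ⋆[ℂ] F := (Finsupp.linearCombination ℂ w).comp
    (Finsupp.mapRange.linearMap (starLinearEquiv ℂ (A := ℂ)).toLinearMap)
  have hB : ∀ l l', ⟪B l, B l'⟫_ℂ = ⟪A l', A l⟫_ℂ := by
    intro l l'
    simp only [B, A, LinearMap.comp_apply, Finsupp.linearCombination_apply,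
      Finsupp.mapRange.linearMap_apply]
    rw [Finsupp.sum_mapRange_index (by simp), Finsupp.sum_mapRange_index (by simp)]
    simp only [Finsupp.sum, sum_inner, inner_sum, inner_smul_left, inner_smul_right, hw,
      Finset.mul_sum]
    rw [Finset.sum_comm]
    refine Finset.sum_congr rfl fun q _ => Finset.sum_congr rfl fun p _ => ?_
    simp only [LinearEquiv.coe_coe, starLinearEquiv_apply, RCLike.star_def, Complex.conj_conj]
    ring
  have hnorm : ∀ l, ‖B l‖ ≤ 1 * ‖A l‖ := fun l => by
    rw [one_mul, norm_eq_sqrt_re_inner (𝕜 := ℂ), norm_eq_sqrt_re_inner (𝕜 := ℂ), hB]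
  have hA : DenseRange A := by
    rwa [DenseRange, ← LinearMap.coe_range, Finsupp.range_linearCombination]
  refine ⟨B.extendOfNorm A, fun p => ?_⟩
  simpa [A, B] using LinearMap.extendOfNorm_eq hA ⟨1, hnorm⟩ (Finsupp.single p 1)

namespace ContinuousLinearMap

def conjInvolution (K : E →L⋆[ℂ] E) (hK : Function.Involutive K) :
    (E →L[ℂ] E) →* (E →L[ℂ] E) where
  toFun T := (K.comp T).comp K
  map_one' := by ext x; exact hK x
  map_mul' S T := by ext x; simp [hK (T (K x))]

theorem conjInvolution_apply (K : E →L⋆[ℂ] E) (hK : Function.Involutive K) (T : E →L[ℂ] E)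
    (x : E) : conjInvolution K hK T x = K (T (K x)) := rfl

theorem star_conjInvolution [CompleteSpace E] (K : E →L⋆[ℂ] E) (hK : Function.Involutive K)
    (hKinner : ∀ x y, ⟪K x, K y⟫_ℂ = ⟪y, x⟫_ℂ) (T : E →L[ℂ] E) :
    star (conjInvolution K hK T) = conjInvolution K hK (star T) := by
  rw [star_eq_adjoint, eq_comm, eq_adjoint_iff]
  intro x y
  rw [conjInvolution_apply, conjInvolution_apply, ← hKinner, hK, star_eq_adjoint,
    adjoint_inner_right, ← hKinner (K x), hK]

theorem conjInvolution_mem_unitary [CompleteSpace E] (K : E →L⋆[ℂ] E)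
    (hK : Function.Involutive K) (hKinner : ∀ x y, ⟪K x, K y⟫_ℂ = ⟪y, x⟫_ℂ) {U : E →L[ℂ] E}
    (hU : U ∈ unitary (E →L[ℂ] E)) : conjInvolution K hK U ∈ unitary (E →L[ℂ] E) := by
  rw [Unitary.mem_iff, star_conjInvolution K hK hKinner, ← map_mul, ← map_mul,
    Unitary.star_mul_self_of_mem hU, Unitary.mul_star_self_of_mem hU, map_one]
  exact ⟨rfl, rfl⟩

end ContinuousLinearMap

/-- `L T` acts as `1 ⊗ T` on the elementary tensors `ι x u` of `G ≅ E ⊗ F`. -/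
def IsAmpliation (ι : E →L[ℂ] F →L[ℂ] G) (L : (F →L[ℂ] F) → (G →L[ℂ] G)) : Prop :=
  ∀ T x u, L T (ι x u) = ι x (T u)

namespace IsAmpliation

variable {ι : E →L[ℂ] F →L[ℂ] G} {L : (F →L[ℂ] F) → (G →L[ℂ] G)}

theorem map_mul (hL : IsAmpliation ι L)
    (hdense : Dense (Submodule.span ℂ (Set.range fun p : E × F => ι p.1 p.2) : Set G))
    (S T : F →L[ℂ] F) : L (S * T) = L S * L T :=
  ContinuousLinearMap.ext_on hdense <| by rintro _ ⟨⟨x, u⟩, rfl⟩; simp [hL _ x]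

theorem map_one (hL : IsAmpliation ι L)
    (hdense : Dense (Submodule.span ℂ (Set.range fun p : E × F => ι p.1 p.2) : Set G)) :
    L 1 = 1 :=
  ContinuousLinearMap.ext_on hdense <| by rintro _ ⟨⟨x, u⟩, rfl⟩; simp [hL _ x]

theorem map_star [CompleteSpace F] [CompleteSpace G] (hL : IsAmpliation ι L)
    (hdense : Dense (Submodule.span ℂ (Set.range fun p : E × F => ι p.1 p.2) : Set G))
    (hι : ∀ x y u v, ⟪ι x u, ι y v⟫_ℂ = ⟪x, y⟫_ℂ * ⟪u, v⟫_ℂ) (T : F →L[ℂ] F) :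
    L (star T) = star (L T) := by
  rw [ContinuousLinearMap.star_eq_adjoint (L T), ContinuousLinearMap.eq_adjoint_iff]
  have := ContinuousLinearMap.ext_on₂ hdense hdense
    (f := (innerSL ℂ).bilinearComp (L (star T)) (.id ℂ G))
    (g := (innerSL ℂ).bilinearComp (.id ℂ G) (L T)) <| by
    rintro _ ⟨⟨x, u⟩, rfl⟩ _ ⟨⟨y, v⟩, rfl⟩
    change ⟪L (star T) (ι x u), ι y v⟫_ℂ = ⟪ι x u, L T (ι y v)⟫_ℂ
    rw [hL, hL, hι, hι, ContinuousLinearMap.star_eq_adjoint,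
      ContinuousLinearMap.adjoint_inner_left]
  exact fun x y => congr($this x y)

theorem mem_unitary [CompleteSpace F] [CompleteSpace G] (hL : IsAmpliation ι L)
    (hdense : Dense (Submodule.span ℂ (Set.range fun p : E × F => ι p.1 p.2) : Set G))
    (hι : ∀ x y u v, ⟪ι x u, ι y v⟫_ℂ = ⟪x, y⟫_ℂ * ⟪u, v⟫_ℂ) {U : F →L[ℂ] F}
    (hU : U ∈ unitary (F →L[ℂ] F)) : L U ∈ unitary (G →L[ℂ] G) := by
  rw [Unitary.mem_iff, ← hL.map_star hdense hι, ← hL.map_mul hdense, ← hL.map_mul hdense,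
    Unitary.star_mul_self_of_mem hU, Unitary.mul_star_self_of_mem hU, hL.map_one hdense]
  exact ⟨rfl, rfl⟩

theorem map_conjInvolution (hL : IsAmpliation ι L)
    (hdense : Dense (Submodule.span ℂ (Set.range fun p : E × F => ι p.1 p.2) : Set G))
    {K : G →L⋆[ℂ] G} (hK : Function.Involutive K) {J : E → E} (hJ : Function.Involutive J)
    {JF : F →L⋆[ℂ] F} (hJF : Function.Involutive JF) (hKι : ∀ x u, K (ι x u) = ι (J x) (JF u))
    (T : F →L[ℂ] F) :
    L (ContinuousLinearMap.conjInvolution JF hJF T) =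
      ContinuousLinearMap.conjInvolution K hK (L T) :=
  ContinuousLinearMap.ext_on hdense <| by
    rintro _ ⟨⟨x, u⟩, rfl⟩
    simp only [ContinuousLinearMap.conjInvolution_apply, hL _ x, hKι, hL _ (J x), hJ x]

end IsAmpliation

end

section Tensor

variable {H H2 H3 : Type*} [NormedAddCommGroup H] [InnerProductSpace ℂ H]
  [NormedAddCommGroup H2] [InnerProductSpace ℂ H2] [NormedAddCommGroup H3] [InnerProductSpace ℂ H3]

theorem inner_tensorRight_eq_mul (τ : H →L[ℂ] H →L[ℂ] H2)
    (hτinner : ∀ a b c d, ⟪τ a b, τ c d⟫_ℂ = ⟪a, c⟫_ℂ * ⟪b, d⟫_ℂ)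
    (hτdense : Dense (Submodule.span ℂ (Set.range fun p : H × H => τ p.1 p.2) : Set H2))
    (m : H2 →L[ℂ] H →L[ℂ] H3) (m' : H →L[ℂ] H2 →L[ℂ] H3)
    (hmm' : ∀ a b c, m (τ a b) c = m' a (τ b c))
    (hminner : ∀ u v c d, ⟪m u c, m v d⟫_ℂ = ⟪u, v⟫_ℂ * ⟪c, d⟫_ℂ) (a b : H) (v w : H2) :
    ⟪m' a v, m' b w⟫_ℂ = ⟪a, b⟫_ℂ * ⟪v, w⟫_ℂ := by
  have := ContinuousLinearMap.ext_on₂ hτdense hτdense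
    (f := (innerSL ℂ).bilinearComp (m' a) (m' b)) (g := ⟪a, b⟫_ℂ • innerSL ℂ) <| by
    rintro _ ⟨⟨a', b'⟩, rfl⟩ _ ⟨⟨c, c'⟩, rfl⟩
    change ⟪m' a (τ a' b'), m' b (τ c c')⟫_ℂ = ⟪a, b⟫_ℂ * ⟪τ a' b', τ c c'⟫_ℂ
    rw [← hmm', ← hmm', hminner, hτinner, hτinner]
    ring
  exact congr($this v w)

theorem exists_involutive_conj_tensorLeft [CompleteSpace H3] (τ : H →L[ℂ] H →L[ℂ] H2)
    (hτinner : ∀ a b c d, ⟪τ a b, τ c d⟫_ℂ = ⟪a, c⟫_ℂ * ⟪b, d⟫_ℂ)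
    (hτdense : Dense (Submodule.span ℂ (Set.range fun p : H × H => τ p.1 p.2) : Set H2))
    (m : H2 →L[ℂ] H →L[ℂ] H3)
    (hminner : ∀ u v c d, ⟪m u c, m v d⟫_ℂ = ⟪u, v⟫_ℂ * ⟪c, d⟫_ℂ)
    (hmdense : Dense (Submodule.span ℂ
      (Set.range fun p : (H × H) × H => m (τ p.1.1 p.1.2) p.2) : Set H3))
    (J : H →ₗᵢ⋆[ℂ] H) (hJ : Function.Involutive J) (JJ : H2 →L⋆[ℂ] H2)
    (hJJ : ∀ a b, JJ (τ a b) = τ (J a) (J b)) :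
    ∃ K : H3 →L⋆[ℂ] H3, Function.Involutive K ∧ ∀ u c, K (m u c) = m (JJ u) (J c) := by
  obtain ⟨K, hK⟩ := exists_conjCLM_of_inner_eq hmdense
    (w := fun p : (H × H) × H => m (τ (J p.1.1) (J p.1.2)) (J p.2))
    (by intro p q; simp only [hminner, hτinner, J.inner_map_map_eq_swap])
  have hKm : ∀ u c, K (m u c) = m (JJ u) (J c) := by
    intro u c
    have := ContinuousLinearMap.ext_on hτdense
      (f := K.comp (m.flip c)) (g := (m.flip (J c)).comp JJ) <| by
      rintro _ ⟨⟨a, b⟩, rfl⟩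
      simpa [hJJ] using hK ((a, b), c)
    exact congr($this u)
  refine ⟨K, fun x => ?_, hKm⟩
  have := ContinuousLinearMap.ext_on hmdense (f := K.comp K) (g := .id ℂ H3) <| by
    rintro _ ⟨⟨⟨a, b⟩, c⟩, rfl⟩
    simp [hKm, hJJ, hJ _]
  exact congr($this x)

theorem conj_tensorRight (τ : H →L[ℂ] H →L[ℂ] H2)
    (hτdense : Dense (Submodule.span ℂ (Set.range fun p : H × H => τ p.1 p.2) : Set H2))
    (m : H2 →L[ℂ] H →L[ℂ] H3) (m' : H →L[ℂ] H2 →L[ℂ] H3)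
    (hmm' : ∀ a b c, m (τ a b) c = m' a (τ b c)) (J : H → H) (JJ : H2 →L⋆[ℂ] H2)
    (hJJ : ∀ a b, JJ (τ a b) = τ (J a) (J b)) (K : H3 →L⋆[ℂ] H3)
    (hKm : ∀ u c, K (m u c) = m (JJ u) (J c)) (a : H) (v : H2) :
    K (m' a v) = m' (J a) (JJ v) := by
  have := ContinuousLinearMap.ext_on hτdense (f := K.comp (m' a)) (g := (m' (J a)).comp JJ) <| by
    rintro _ ⟨⟨b, c⟩, rfl⟩
    simp [← hmm', hKm, hJJ]
  exact congr($this v)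

theorem conjInvolution_flip (τ : H →L[ℂ] H →L[ℂ] H2)
    (hτdense : Dense (Submodule.span ℂ (Set.range fun p : H × H => τ p.1 p.2) : Set H2))
    {J : H → H} (hJ : Function.Involutive J) {JJ : H2 →L⋆[ℂ] H2} (hJJ : Function.Involutive JJ)
    (hJJτ : ∀ a b, JJ (τ a b) = τ (J a) (J b)) {Sg : H2 →L[ℂ] H2}
    (hSg : ∀ a b, Sg (τ a b) = τ b a) :
    ContinuousLinearMap.conjInvolution JJ hJJ Sg = Sg :=
  ContinuousLinearMap.ext_on hτdense <| by
    rintro _ ⟨⟨a, b⟩, rfl⟩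
    simp only [ContinuousLinearMap.conjInvolution_apply, hJJτ, hSg, hJ _]

end Tensor

theorem stmt_5
    {H H2 H3 : Type*}
    [NormedAddCommGroup H] [InnerProductSpace ℂ H] [CompleteSpace H]
    [NormedAddCommGroup H2] [InnerProductSpace ℂ H2] [CompleteSpace H2]
    [NormedAddCommGroup H3] [InnerProductSpace ℂ H3] [CompleteSpace H3]
    -- the tensor map H × H → H ⊗ H = H2
    (τ : H →L[ℂ] H →L[ℂ] H2)
    (hτinner : ∀ a b c d : H, (inner ℂ (τ a b) (τ c d) : ℂ) = (inner ℂ a c : ℂ) * (inner ℂ b d : ℂ))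
    (hτdense : Dense (Submodule.span ℂ (Set.range fun p : H × H => τ p.1 p.2) : Set H2))
    -- the tensor maps (H ⊗ H) × H → H ⊗ H ⊗ H = H3 and H × (H ⊗ H) → H ⊗ H ⊗ H
    (m : H2 →L[ℂ] H →L[ℂ] H3)
    (m' : H →L[ℂ] H2 →L[ℂ] H3)
    (hmm' : ∀ a b c : H, m (τ a b) c = m' a (τ b c))
    (hminner : ∀ (u v : H2) (c d : H), (inner ℂ (m u c) (m v d) : ℂ) = (inner ℂ u v : ℂ) * (inner ℂ c d : ℂ))
    (hmdense : Dense (Submodule.span ℂ (Set.range fun p : (H × H) × H => m (τ p.1.1 p.1.2) p.2) : Set H3))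
    -- the leg maps T ↦ T₁₂ = T ⊗ 1, T ↦ T₂₃ = 1 ⊗ T, T ↦ T₁₃ = (Σ⊗1)(1⊗T)(Σ⊗1)
    (leg12 leg23 leg13 : (H2 →L[ℂ] H2) → (H3 →L[ℂ] H3))
    (hleg12 : ∀ (T : H2 →L[ℂ] H2) (u : H2) (c : H), leg12 T (m u c) = m (T u) c)
    (hleg23 : ∀ (T : H2 →L[ℂ] H2) (a : H) (v : H2), leg23 T (m' a v) = m' a (T v))
    -- the flip unitary Σ on H ⊗ H
    (Sg : H2 →L[ℂ] H2)
    (hSg : ∀ a b : H, Sg (τ a b) = τ b a)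
    (hleg13 : ∀ T : H2 →L[ℂ] H2, leg13 T = leg12 Sg * leg23 T * leg12 Sg)
    -- the multiplicative unitary W, satisfying the pentagonal equation
    (W : H2 →L[ℂ] H2)
    (hWl : W * star W = 1) (hWr : star W * W = 1)
    (hPent : leg12 W * leg13 W * leg23 W = leg23 W * leg12 W)
    -- J : a conjugate-linear isometric involution of H
    (J : H → H)
    (hJadd : ∀ x y : H, J (x + y) = J x + J y)
    (hJsmul : ∀ (c : ℂ) (x : H), J (c • x) = (starRingEnd ℂ) c • J x)
    (hJnorm : ∀ x : H, ‖J x‖ = ‖x‖)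
    (hJinv : ∀ x : H, J (J x) = x)
    -- JJ : the conjugate-linear involution J⊗J of H ⊗ H
    (JJ : H2 → H2)
    (hJJadd : ∀ x y : H2, JJ (x + y) = JJ x + JJ y)
    (hJJsmul : ∀ (c : ℂ) (x : H2), JJ (c • x) = (starRingEnd ℂ) c • JJ x)
    (hJJnorm : ∀ x : H2, ‖JJ x‖ = ‖x‖)
    (hJJinv : ∀ x : H2, JJ (JJ x) = x)
    (hJJtmul : ∀ a b : H, JJ (τ a b) = τ (J a) (J b))
    -- W' = (J⊗J) W (J⊗J), the commutant multiplicative unitary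
    (W' : H2 →L[ℂ] H2)
    (hW' : ∀ x : H2, W' x = JJ (W (JJ x)))
    :
    leg13 W' * leg23 W = star (leg12 W') * leg23 W' * leg12 W' * star (leg23 W') * leg23 W := by
  let Jl : H →ₗᵢ⋆[ℂ] H := ⟨⟨⟨J, hJadd⟩, hJsmul⟩, hJnorm⟩
  let JJl : H2 →ₗᵢ⋆[ℂ] H2 := ⟨⟨⟨JJ, hJJadd⟩, hJJsmul⟩, hJJnorm⟩
  have hJJl : Function.Involutive JJl.toContinuousLinearMap := hJJinv
  obtain ⟨K, hK, hKm⟩ := exists_involutive_conj_tensorLeft τ hτinner hτdense m hminner hmdense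
    Jl hJinv JJl.toContinuousLinearMap hJJtmul
  let ψ := ContinuousLinearMap.conjInvolution JJl.toContinuousLinearMap hJJl
  let φ := ContinuousLinearMap.conjInvolution K hK
  have h12 : IsAmpliation m.flip leg12 := fun T c u => hleg12 T u c
  have hd12 : Dense (Submodule.span ℂ (Set.range fun p : H × H2 => m.flip p.1 p.2) : Set H3) :=
    hmdense.mono <| Submodule.span_mono <| by rintro _ ⟨⟨⟨a, b⟩, c⟩, rfl⟩; exact ⟨(c, τ a b), rfl⟩
  have hd23 : Dense (Submodule.span ℂ (Set.range fun p : H × H2 => m' p.1 p.2) : Set H3) :=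
    hmdense.mono <| Submodule.span_mono <| by
      rintro _ ⟨⟨⟨a, b⟩, c⟩, rfl⟩; exact ⟨(a, τ b c), (hmm' a b c).symm⟩
  have hψ12 : ∀ T, leg12 (ψ T) = φ (leg12 T) :=
    h12.map_conjInvolution hd12 hK hJinv hJJl fun c u => hKm u c
  have hψ23 : ∀ T, leg23 (ψ T) = φ (leg23 T) :=
    IsAmpliation.map_conjInvolution hleg23 hd23 hK hJinv hJJl
      (conj_tensorRight τ hτdense m m' hmm' J _ hJJtmul K hKm)
  have hψ13 : ∀ T, leg13 (ψ T) = φ (leg13 T) := fun T => by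
    rw [hleg13, hleg13, map_mul, map_mul, ← hψ12, ← hψ23,
      conjInvolution_flip τ hτdense hJinv hJJl hJJtmul hSg]
  have hW'ψ : W' = ψ W := ContinuousLinearMap.ext hW'
  have hPent' : leg12 W' * leg13 W' * leg23 W' = leg23 W' * leg12 W' := by
    rw [hW'ψ, hψ12, hψ13, hψ23, ← map_mul, ← map_mul, ← map_mul, hPent]
  have hU : W' ∈ unitary (H2 →L[ℂ] H2) := hW'ψ ▸
    ContinuousLinearMap.conjInvolution_mem_unitary _ hJJl JJl.inner_map_map_eq_swap ⟨hWr, hWl⟩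
  rw [Unitary.eq_star_mul_mul_mul_star_of_mul_mul_eq
    (h12.mem_unitary hd12 (fun c d u v => by rw [m.flip_apply, m.flip_apply, hminner, mul_comm]) hU)
    (IsAmpliation.mem_unitary hleg23 hd23
      (inner_tensorRight_eq_mul τ hτinner hτdense m m' hmm' hminner) hU) hPent']
end
end

section
/- W''₁₃ W''₂₃ = W'₁₂* W''₂₃ W'₁₂ as bounded operators on H⊗H⊗H. -/
/-!
The anti-unitary `K = J ⊗ J ⊗ Ĵ` of `H ⊗ H ⊗ H`, obtained by continuity from its values on
elementary tensors, is an involution with `K W₁₂ K = W'₁₂` and `K W₂₃ K = W''₂₃`; since `J ⊗ J`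
commutes with the flip `Σ`, also `K W₁₃ K = W''₁₃`. Conjugating the pentagonal equation by `K`
gives `W'₁₂ W''₁₃ W''₂₃ = W''₂₃ W'₁₂`, and `W'₁₂` is an isometry because `W'` is.
-/

open scoped ComplexConjugate InnerProductSpace

section Antilinear

variable {E F : Type*} [NormedAddCommGroup E] [InnerProductSpace ℂ E]
  [NormedAddCommGroup F] [InnerProductSpace ℂ F]

theorem LinearIsometry.inner_map_map_conj (A : E →ₗᵢ⋆[ℂ] F) (x y : E) :
    ⟪A x, A y⟫_ℂ = conj ⟪x, y⟫_ℂ := by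
  have hI : Complex.I • A y = A (-(Complex.I • y)) := by
    rw [map_neg, A.map_smulₛₗ, Complex.conj_I, neg_smul, neg_neg]
  have h₁ : ‖A x - Complex.I • A y‖ = ‖x + Complex.I • y‖ := by
    rw [hI, ← map_sub, A.norm_map, sub_neg_eq_add]
  have h₂ : ‖A x + Complex.I • A y‖ = ‖x - Complex.I • y‖ := by
    rw [hI, ← map_add, A.norm_map, ← sub_eq_add_neg]
  rw [inner_eq_sum_norm_sq_div_four, inner_eq_sum_norm_sq_div_four x y, ← map_add, ← map_sub,
    A.norm_map, A.norm_map]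
  simp only [RCLike.I_to_complex, h₁, h₂, map_div₀, map_add, map_sub, map_mul, map_pow,
    RCLike.conj_ofReal, Complex.conj_I, map_ofNat]
  ring

def antilinearIsometryOfNorm (A : E → F) (hadd : ∀ x y, A (x + y) = A x + A y)
    (hsmul : ∀ (c : ℂ) x, A (c • x) = conj c • A x) (hnorm : ∀ x, ‖A x‖ = ‖x‖) :
    E →ₗᵢ⋆[ℂ] F where
  toFun := A
  map_add' := hadd
  map_smul' := hsmul
  norm_map' := hnorm

@[simp]
theorem coe_antilinearIsometryOfNorm (A : E → F) (hadd : ∀ x y, A (x + y) = A x + A y)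
    (hsmul : ∀ (c : ℂ) x, A (c • x) = conj c • A x) (hnorm : ∀ x, ‖A x‖ = ‖x‖) :
    ⇑(antilinearIsometryOfNorm A hadd hsmul hnorm) = A := rfl

theorem exists_antilinear_extension [CompleteSpace F] {ι : Type*} (g : ι → E) (g' : ι → F)
    (hinner : ∀ p q, ⟪g' p, g' q⟫_ℂ = conj ⟪g p, g q⟫_ℂ)
    (hdense : Dense (Submodule.span ℂ (Set.range g) : Set E)) :
    ∃ K : E →L⋆[ℂ] F, ∀ p, K (g p) = g' p := by
  let π : (ι →₀ ℂ) →ₗ[ℂ] E := Finsupp.linearCombination ℂ g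
  let κ : (ι →₀ ℂ) →ₗ⋆[ℂ] F := (Finsupp.linearCombination ℂ g').comp
    (Finsupp.mapRange.linearMap (starLinearEquiv ℂ (A := ℂ)).toLinearMap)
  have hκ : ∀ v, κ v = v.sum fun p c => conj c • g' p := fun v => by
    simp [κ, Finsupp.linearCombination_apply, Finsupp.sum_mapRange_index]
  have hκπ : ∀ v w, ⟪κ v, κ w⟫_ℂ = conj ⟪π v, π w⟫_ℂ := by
    intro v w
    simp [hκ, π, Finsupp.linearCombination_apply, Finsupp.sum, hinner]
  have hnorm : ∀ v, ‖κ v‖ ≤ 1 * ‖π v‖ := fun v => by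
    rw [one_mul, @norm_eq_sqrt_re_inner ℂ, @norm_eq_sqrt_re_inner ℂ, hκπ, RCLike.conj_re]
  have hrange : DenseRange π := by
    rw [DenseRange, ← LinearMap.coe_range, Finsupp.range_linearCombination]
    exact hdense
  refine ⟨κ.extendOfNorm π, fun p => ?_⟩
  have := LinearMap.extendOfNorm_eq hrange ⟨1, hnorm⟩ (Finsupp.single p 1)
  simpa [π, κ] using this

end Antilinear

section ConjByAntilinear

variable {E : Type*} [NormedAddCommGroup E] [InnerProductSpace ℂ E]

def conjByAntilinear (K : E →L⋆[ℂ] E) (T : E →L[ℂ] E) : E →L[ℂ] E := K.comp (T.comp K)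

@[simp]
theorem conjByAntilinear_apply (K : E →L⋆[ℂ] E) (T : E →L[ℂ] E) (x : E) :
    conjByAntilinear K T x = K (T (K x)) := rfl

theorem conjByAntilinear_mul {K : E →L⋆[ℂ] E} (hK : ∀ x, K (K x) = x) (S T : E →L[ℂ] E) :
    conjByAntilinear K (S * T) = conjByAntilinear K S * conjByAntilinear K T := by
  ext x
  simp [hK]

theorem star_mul_self_conjByAntilinear [CompleteSpace E] {K : E →L⋆[ℂ] E}
    (hK : ∀ x y, ⟪K x, K y⟫_ℂ = conj ⟪x, y⟫_ℂ) {T : E →L[ℂ] E} (hT : star T * T = 1) :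
    star (conjByAntilinear K T) * conjByAntilinear K T = 1 := by
  have hTiso := (T.inner_map_map_iff_adjoint_comp_self).2 hT
  refine (ContinuousLinearMap.inner_map_map_iff_adjoint_comp_self _).1 fun x y => ?_
  simp [hK, hTiso]

end ConjByAntilinear

section TensorMap

variable {E F G : Type*} [NormedAddCommGroup E] [InnerProductSpace ℂ E]
  [NormedAddCommGroup F] [InnerProductSpace ℂ F] [NormedAddCommGroup G] [InnerProductSpace ℂ G]
  {m : E →L[ℂ] F →L[ℂ] G} {leg : (E →L[ℂ] E) → (G →L[ℂ] G)}

theorem exists_antilinear_tensorMap [CompleteSpace G]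
    (hm : Dense (Submodule.span ℂ (Set.range fun p : E × F => m p.1 p.2) : Set G))
    (hinner : ∀ u v c d, ⟪m u c, m v d⟫_ℂ = ⟪u, v⟫_ℂ * ⟪c, d⟫_ℂ)
    (A : E →ₗᵢ⋆[ℂ] E) (B : F →ₗᵢ⋆[ℂ] F) :
    ∃ K : G →L⋆[ℂ] G, ∀ u c, K (m u c) = m (A u) (B c) := by
  obtain ⟨K, hK⟩ := exists_antilinear_extension (fun p : E × F => m p.1 p.2)
    (fun p => m (A p.1) (B p.2))
    (fun p q => by simp [hinner, A.inner_map_map_conj, B.inner_map_map_conj]) hm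
  exact ⟨K, fun u c => hK (u, c)⟩

theorem antilinear_tensorMap_involutive
    (hm : Dense (Submodule.span ℂ (Set.range fun p : E × F => m p.1 p.2) : Set G))
    {K : G →L⋆[ℂ] G} {A : E → E} {B : F → F} (hK : ∀ u c, K (m u c) = m (A u) (B c))
    (hA : ∀ u, A (A u) = u) (hB : ∀ c, B (B c) = c) (x : G) : K (K x) = x := by
  have : (K.comp K : G →L[ℂ] G) = ContinuousLinearMap.id ℂ G :=
    ContinuousLinearMap.ext_on hm <| by rintro _ ⟨⟨u, c⟩, rfl⟩; simp [hK, hA, hB]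
  exact congr($this x)

theorem leg_conjByAntilinear
    (hm : Dense (Submodule.span ℂ (Set.range fun p : E × F => m p.1 p.2) : Set G))
    (hleg : ∀ T u c, leg T (m u c) = m (T u) c) {K : G →L⋆[ℂ] G} {A : E →L⋆[ℂ] E} {B : F → F}
    (hK : ∀ u c, K (m u c) = m (A u) (B c)) (hB : ∀ c, B (B c) = c) (T : E →L[ℂ] E) :
    leg (conjByAntilinear A T) = conjByAntilinear K (leg T) :=
  ContinuousLinearMap.ext_on hm <| by rintro _ ⟨⟨u, c⟩, rfl⟩; simp [hleg, hK, hB]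

theorem eq_of_inner_left_on_range₂
    (hm : Dense (Submodule.span ℂ (Set.range fun p : E × F => m p.1 p.2) : Set G)) {x y : G}
    (h : ∀ u c, ⟪x, m u c⟫_ℂ = ⟪y, m u c⟫_ℂ) : x = y := by
  have : innerSL ℂ x = innerSL ℂ y :=
    ContinuousLinearMap.ext_on hm <| by rintro _ ⟨⟨u, c⟩, rfl⟩; simp [h]
  exact ext_inner_right ℂ fun v => by simpa using congr($this v)

theorem leg_mul (hm : Dense (Submodule.span ℂ (Set.range fun p : E × F => m p.1 p.2) : Set G))
    (hleg : ∀ T u c, leg T (m u c) = m (T u) c) (S T : E →L[ℂ] E) :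
    leg (S * T) = leg S * leg T :=
  ContinuousLinearMap.ext_on hm <| by rintro _ ⟨⟨u, c⟩, rfl⟩; simp [hleg]

theorem leg_one (hm : Dense (Submodule.span ℂ (Set.range fun p : E × F => m p.1 p.2) : Set G))
    (hleg : ∀ T u c, leg T (m u c) = m (T u) c) : leg 1 = 1 :=
  ContinuousLinearMap.ext_on hm <| by rintro _ ⟨⟨u, c⟩, rfl⟩; simp [hleg]

theorem leg_star [CompleteSpace E] [CompleteSpace G]
    (hm : Dense (Submodule.span ℂ (Set.range fun p : E × F => m p.1 p.2) : Set G))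
    (hinner : ∀ u v c d, ⟪m u c, m v d⟫_ℂ = ⟪u, v⟫_ℂ * ⟪c, d⟫_ℂ)
    (hleg : ∀ T u c, leg T (m u c) = m (T u) c) (T : E →L[ℂ] E) :
    leg (star T) = star (leg T) := by
  refine ContinuousLinearMap.ext_on hm ?_
  rintro _ ⟨⟨u, c⟩, rfl⟩
  refine eq_of_inner_left_on_range₂ hm fun v d => ?_
  simp only [hleg, hinner, ContinuousLinearMap.star_eq_adjoint,
    ContinuousLinearMap.adjoint_inner_left]

theorem star_mul_self_leg [CompleteSpace E] [CompleteSpace G]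
    (hm : Dense (Submodule.span ℂ (Set.range fun p : E × F => m p.1 p.2) : Set G))
    (hinner : ∀ u v c d, ⟪m u c, m v d⟫_ℂ = ⟪u, v⟫_ℂ * ⟪c, d⟫_ℂ)
    (hleg : ∀ T u c, leg T (m u c) = m (T u) c) {T : E →L[ℂ] E} (hT : star T * T = 1) :
    star (leg T) * leg T = 1 := by
  rw [← leg_star hm hinner hleg, ← leg_mul hm hleg, hT, leg_one hm hleg]

end TensorMap

theorem stmt_6_general
    {H H2 H3 : Type*}
    [NormedAddCommGroup H] [InnerProductSpace ℂ H] [CompleteSpace H]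
    [NormedAddCommGroup H2] [InnerProductSpace ℂ H2] [CompleteSpace H2]
    [NormedAddCommGroup H3] [InnerProductSpace ℂ H3] [CompleteSpace H3]
    -- the tensor map H × H → H ⊗ H = H2
    (τ : H →L[ℂ] H →L[ℂ] H2)
    (hτdense : Dense (Submodule.span ℂ (Set.range fun p : H × H => τ p.1 p.2) : Set H2))
    -- the tensor maps (H ⊗ H) × H → H ⊗ H ⊗ H = H3 and H × (H ⊗ H) → H ⊗ H ⊗ H
    (m : H2 →L[ℂ] H →L[ℂ] H3)
    (m' : H →L[ℂ] H2 →L[ℂ] H3)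
    (hmm' : ∀ a b c : H, m (τ a b) c = m' a (τ b c))
    (hminner : ∀ (u v : H2) (c d : H), (inner ℂ (m u c) (m v d) : ℂ) = (inner ℂ u v : ℂ) * (inner ℂ c d : ℂ))
    (hmdense : Dense (Submodule.span ℂ (Set.range fun p : (H × H) × H => m (τ p.1.1 p.1.2) p.2) : Set H3))
    -- the leg maps T ↦ T₁₂ = T ⊗ 1, T ↦ T₂₃ = 1 ⊗ T, T ↦ T₁₃ = (Σ⊗1)(1⊗T)(Σ⊗1)
    (leg12 leg23 leg13 : (H2 →L[ℂ] H2) → (H3 →L[ℂ] H3))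
    (hleg12 : ∀ (T : H2 →L[ℂ] H2) (u : H2) (c : H), leg12 T (m u c) = m (T u) c)
    (hleg23 : ∀ (T : H2 →L[ℂ] H2) (a : H) (v : H2), leg23 T (m' a v) = m' a (T v))
    -- the flip unitary Σ on H ⊗ H
    (Sg : H2 →L[ℂ] H2)
    (hSg : ∀ a b : H, Sg (τ a b) = τ b a)
    (hleg13 : ∀ T : H2 →L[ℂ] H2, leg13 T = leg12 Sg * leg23 T * leg12 Sg)
    -- the multiplicative unitary W, satisfying the pentagonal equation
    (W : H2 →L[ℂ] H2)
    (hWr : star W * W = 1)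
    (hPent : leg12 W * leg13 W * leg23 W = leg23 W * leg12 W)
    -- J : a conjugate-linear isometric involution of H
    (J : H → H)
    (hJinv : ∀ x : H, J (J x) = x)
    -- Jh : a conjugate-linear isometric involution of H
    (Jh : H → H)
    (hJhadd : ∀ x y : H, Jh (x + y) = Jh x + Jh y)
    (hJhsmul : ∀ (c : ℂ) (x : H), Jh (c • x) = (starRingEnd ℂ) c • Jh x)
    (hJhnorm : ∀ x : H, ‖Jh x‖ = ‖x‖)
    (hJhinv : ∀ x : H, Jh (Jh x) = x)
    -- JJ : the conjugate-linear involution J⊗J of H ⊗ H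
    (JJ : H2 → H2)
    (hJJadd : ∀ x y : H2, JJ (x + y) = JJ x + JJ y)
    (hJJsmul : ∀ (c : ℂ) (x : H2), JJ (c • x) = (starRingEnd ℂ) c • JJ x)
    (hJJnorm : ∀ x : H2, ‖JJ x‖ = ‖x‖)
    (hJJinv : ∀ x : H2, JJ (JJ x) = x)
    (hJJtmul : ∀ a b : H, JJ (τ a b) = τ (J a) (J b))
    -- JJh : the conjugate-linear involution J⊗Ĵ of H ⊗ H
    (JJh : H2 → H2)
    (hJJhadd : ∀ x y : H2, JJh (x + y) = JJh x + JJh y)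
    (hJJhsmul : ∀ (c : ℂ) (x : H2), JJh (c • x) = (starRingEnd ℂ) c • JJh x)
    (hJJhnorm : ∀ x : H2, ‖JJh x‖ = ‖x‖)
    (hJJhtmul : ∀ a b : H, JJh (τ a b) = τ (J a) (Jh b))
    -- W' = (J⊗J) W (J⊗J), the commutant multiplicative unitary
    (W' : H2 →L[ℂ] H2)
    (hW' : ∀ x : H2, W' x = JJ (W (JJ x)))
    -- W'' = (J⊗Ĵ) W (J⊗Ĵ) (in the quantum group setting, W'' = (W'ᵒᵖ)*)
    (W'' : H2 →L[ℂ] H2)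
    (hW'' : ∀ x : H2, W'' x = JJh (W (JJh x)))
    :
    leg13 W'' * leg23 W'' = star (leg12 W') * leg23 W'' * leg12 W' := by
  let jj := antilinearIsometryOfNorm JJ hJJadd hJJsmul hJJnorm
  let jjh := antilinearIsometryOfNorm JJh hJJhadd hJJhsmul hJJhnorm
  have hm : Dense (Submodule.span ℂ (Set.range fun p : H2 × H => m p.1 p.2) : Set H3) :=
    hmdense.mono <| Submodule.span_mono <| by rintro _ ⟨⟨⟨a, b⟩, c⟩, rfl⟩; exact ⟨(τ a b, c), rfl⟩
  have hm' : Dense (Submodule.span ℂ (Set.range fun p : H2 × H => m'.flip p.1 p.2) : Set H3) :=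
    hmdense.mono <| Submodule.span_mono <| by
      rintro _ ⟨⟨⟨a, b⟩, c⟩, rfl⟩; exact ⟨(τ b c, a), (hmm' a b c).symm⟩
  obtain ⟨K, hK⟩ := exists_antilinear_tensorMap hm hminner jj
    (antilinearIsometryOfNorm Jh hJhadd hJhsmul hJhnorm)
  replace hK : ∀ u c, K (m u c) = m (JJ u) (Jh c) := hK
  have hK' : ∀ v a, K (m'.flip v a) = m'.flip (JJh v) (J a) := by
    intro v a
    have : K.comp (m' a) = (m' (J a)).comp jjh.toContinuousLinearMap :=
      ContinuousLinearMap.ext_on hτdense <| by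
        rintro _ ⟨⟨b, c⟩, rfl⟩
        show K (m' a (τ b c)) = m' (J a) (JJh (τ b c))
        rw [← hmm', hK, hJJtmul, hJJhtmul, hmm']
    exact congr($this v)
  have hKK := antilinear_tensorMap_involutive hm hK hJJinv hJhinv
  have hSg' : conjByAntilinear jj.toContinuousLinearMap Sg = Sg :=
    ContinuousLinearMap.ext_on hτdense <| by rintro _ ⟨⟨a, b⟩, rfl⟩; simp [jj, hJJtmul, hSg, hJinv]
  have hW'conj : W' = conjByAntilinear jj.toContinuousLinearMap W := ContinuousLinearMap.ext hW'
  have h12 := leg_conjByAntilinear (A := jj.toContinuousLinearMap) hm hleg12 hK hJhinv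
  have h23 : leg23 W'' = conjByAntilinear K (leg23 W) := by
    rw [show W'' = conjByAntilinear jjh.toContinuousLinearMap W from ContinuousLinearMap.ext hW'']
    exact leg_conjByAntilinear hm' (fun T v a => hleg23 T a v) hK' hJinv W
  have h13 : leg13 W'' = conjByAntilinear K (leg13 W) := by
    rw [hleg13, hleg13, h23, conjByAntilinear_mul hKK, conjByAntilinear_mul hKK, ← h12, hSg']
  have hPent' : leg12 W' * leg13 W'' * leg23 W'' = leg23 W'' * leg12 W' := by
    rw [h13, h23, hW'conj, h12, ← conjByAntilinear_mul hKK, ← conjByAntilinear_mul hKK, hPent,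
      conjByAntilinear_mul hKK]
  have hunit : star (leg12 W') * leg12 W' = 1 := star_mul_self_leg hm hminner hleg12 <| by
    rw [hW'conj]; exact star_mul_self_conjByAntilinear jj.inner_map_map_conj hWr
  rw [mul_assoc (star _), ← hPent', ← mul_assoc, ← mul_assoc, hunit, one_mul]

theorem stmt_6
    {H H2 H3 : Type*}
    [NormedAddCommGroup H] [InnerProductSpace ℂ H] [CompleteSpace H]
    [NormedAddCommGroup H2] [InnerProductSpace ℂ H2] [CompleteSpace H2]
    [NormedAddCommGroup H3] [InnerProductSpace ℂ H3] [CompleteSpace H3]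
    -- the tensor map H × H → H ⊗ H = H2
    (τ : H →L[ℂ] H →L[ℂ] H2)
    (hτinner : ∀ a b c d : H, (inner ℂ (τ a b) (τ c d) : ℂ) = (inner ℂ a c : ℂ) * (inner ℂ b d : ℂ))
    (hτdense : Dense (Submodule.span ℂ (Set.range fun p : H × H => τ p.1 p.2) : Set H2))
    -- the tensor maps (H ⊗ H) × H → H ⊗ H ⊗ H = H3 and H × (H ⊗ H) → H ⊗ H ⊗ H
    (m : H2 →L[ℂ] H →L[ℂ] H3)
    (m' : H →L[ℂ] H2 →L[ℂ] H3)
    (hmm' : ∀ a b c : H, m (τ a b) c = m' a (τ b c))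
    (hminner : ∀ (u v : H2) (c d : H), (inner ℂ (m u c) (m v d) : ℂ) = (inner ℂ u v : ℂ) * (inner ℂ c d : ℂ))
    (hmdense : Dense (Submodule.span ℂ (Set.range fun p : (H × H) × H => m (τ p.1.1 p.1.2) p.2) : Set H3))
    -- the leg maps T ↦ T₁₂ = T ⊗ 1, T ↦ T₂₃ = 1 ⊗ T, T ↦ T₁₃ = (Σ⊗1)(1⊗T)(Σ⊗1)
    (leg12 leg23 leg13 : (H2 →L[ℂ] H2) → (H3 →L[ℂ] H3))
    (hleg12 : ∀ (T : H2 →L[ℂ] H2) (u : H2) (c : H), leg12 T (m u c) = m (T u) c)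
    (hleg23 : ∀ (T : H2 →L[ℂ] H2) (a : H) (v : H2), leg23 T (m' a v) = m' a (T v))
    -- the flip unitary Σ on H ⊗ H
    (Sg : H2 →L[ℂ] H2)
    (hSg : ∀ a b : H, Sg (τ a b) = τ b a)
    (hleg13 : ∀ T : H2 →L[ℂ] H2, leg13 T = leg12 Sg * leg23 T * leg12 Sg)
    -- the multiplicative unitary W, satisfying the pentagonal equation
    (W : H2 →L[ℂ] H2)
    (hWl : W * star W = 1) (hWr : star W * W = 1)
    (hPent : leg12 W * leg13 W * leg23 W = leg23 W * leg12 W)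
    -- J : a conjugate-linear isometric involution of H
    (J : H → H)
    (hJadd : ∀ x y : H, J (x + y) = J x + J y)
    (hJsmul : ∀ (c : ℂ) (x : H), J (c • x) = (starRingEnd ℂ) c • J x)
    (hJnorm : ∀ x : H, ‖J x‖ = ‖x‖)
    (hJinv : ∀ x : H, J (J x) = x)
    -- Jh : a conjugate-linear isometric involution of H
    (Jh : H → H)
    (hJhadd : ∀ x y : H, Jh (x + y) = Jh x + Jh y)
    (hJhsmul : ∀ (c : ℂ) (x : H), Jh (c • x) = (starRingEnd ℂ) c • Jh x)
    (hJhnorm : ∀ x : H, ‖Jh x‖ = ‖x‖)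
    (hJhinv : ∀ x : H, Jh (Jh x) = x)
    -- JJ : the conjugate-linear involution J⊗J of H ⊗ H
    (JJ : H2 → H2)
    (hJJadd : ∀ x y : H2, JJ (x + y) = JJ x + JJ y)
    (hJJsmul : ∀ (c : ℂ) (x : H2), JJ (c • x) = (starRingEnd ℂ) c • JJ x)
    (hJJnorm : ∀ x : H2, ‖JJ x‖ = ‖x‖)
    (hJJinv : ∀ x : H2, JJ (JJ x) = x)
    (hJJtmul : ∀ a b : H, JJ (τ a b) = τ (J a) (J b))
    -- JJh : the conjugate-linear involution J⊗Ĵ of H ⊗ H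
    (JJh : H2 → H2)
    (hJJhadd : ∀ x y : H2, JJh (x + y) = JJh x + JJh y)
    (hJJhsmul : ∀ (c : ℂ) (x : H2), JJh (c • x) = (starRingEnd ℂ) c • JJh x)
    (hJJhnorm : ∀ x : H2, ‖JJh x‖ = ‖x‖)
    (hJJhinv : ∀ x : H2, JJh (JJh x) = x)
    (hJJhtmul : ∀ a b : H, JJh (τ a b) = τ (J a) (Jh b))
    -- W' = (J⊗J) W (J⊗J), the commutant multiplicative unitary
    (W' : H2 →L[ℂ] H2)
    (hW' : ∀ x : H2, W' x = JJ (W (JJ x)))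
    -- W'' = (J⊗Ĵ) W (J⊗Ĵ) (in the quantum group setting, W'' = (W'ᵒᵖ)*)
    (W'' : H2 →L[ℂ] H2)
    (hW'' : ∀ x : H2, W'' x = JJh (W (JJh x)))
    :
    leg13 W'' * leg23 W'' = star (leg12 W') * leg23 W'' * leg12 W' :=
  stmt_6_general τ hτdense m m' hmm' hminner hmdense leg12 leg23 leg13 hleg12 hleg23 Sg hSg hleg13 W
    hWr hPent J hJinv Jh hJhadd hJhsmul hJhnorm hJhinv JJ hJJadd hJJsmul hJJnorm hJJinv hJJtmul JJh
    hJJhadd hJJhsmul hJJhnorm hJJhtmul W' hW' W'' hW''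
end

section
/- Suppose that W₁₃ commutes with W''₁₂ (as holds in the quantum group setting, where the first leg of W lies in the von Neumann algebra M and the first leg of W'' lies in its commutant M'). Then W₂₃ W₁₂ W''₁₂ = W₁₂ W''₁₂ W₁₃ W₂₃ W'₁₃* as bounded operators on H⊗H⊗H. -/
/-!
Conjugate the pentagon equation `W₁₂ W₁₃ W₂₃ = W₂₃ W₁₂` by the antiunitary involution
`Θ = J ⊗ Ĵ ⊗ J` of `H ⊗ H ⊗ H`. Leg by leg, `Θ W₁₂ Θ = W''₁₂`, `Θ W₂₃ Θ = W*₂₃` (this is where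
`W* = (Ĵ ⊗ J) W (Ĵ ⊗ J)` enters) and `Θ W₁₃ Θ = W'₁₃`, so `W''₁₂ W'₁₃ W*₂₃ = W*₂₃ W''₁₂`, i.e.
`W₂₃ W''₁₂ W'₁₃ = W''₁₂ W₂₃`. Then
`W₁₂ W''₁₂ W₁₃ W₂₃ W'₁₃* = W₁₂ W₁₃ W''₁₂ W₂₃ W'₁₃* = W₁₂ W₁₃ W₂₃ W''₁₂ = W₂₃ W₁₂ W''₁₂`.
Since the tensor products are only given through `τ`, `m`, `m'`, the antiunitary `Θ` is built by
extending its values on elementary tensors, and every identity between operators is checked on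
elementary tensors.
-/

open scoped ComplexInnerProductSpace
open Submodule (span)
open ContinuousLinearMap

section ConjLinear

variable {E F : Type*} [NormedAddCommGroup E] [InnerProductSpace ℂ E]
  [NormedAddCommGroup F] [InnerProductSpace ℂ F]

def conjLinearIsometry (A : E → E) (hadd : ∀ x y, A (x + y) = A x + A y)
    (hsmul : ∀ (c : ℂ) x, A (c • x) = starRingEnd ℂ c • A x) (hnorm : ∀ x, ‖A x‖ = ‖x‖) :
    E →ₗᵢ⋆[ℂ] E where
  toFun := A
  map_add' := hadd
  map_smul' := hsmul
  norm_map' := hnorm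

@[simp]
theorem conjLinearIsometry_apply (A : E → E) (hadd) (hsmul) (hnorm) (x : E) :
    conjLinearIsometry A hadd hsmul hnorm x = A x :=
  rfl

theorem LinearIsometry.inner_map_map_of_conj (f : E →ₗᵢ⋆[ℂ] F) (x y : E) :
    ⟪f x, f y⟫ = ⟪y, x⟫ := by
  have hI : ∀ z, f (Complex.I • z) = -(Complex.I • f z) := fun z => by
    rw [map_smulₛₗ, Complex.conj_I, neg_smul]
  have h₁ : ‖f x - Complex.I • f y‖ = ‖y - Complex.I • x‖ := by
    rw [sub_eq_add_neg, ← hI, ← map_add, f.norm_map,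
      show y - Complex.I • x = -Complex.I • (x + Complex.I • y) by
        simp [smul_add, smul_smul, sub_eq_add_neg, add_comm],
      norm_smul]
    simp
  have h₂ : ‖f x + Complex.I • f y‖ = ‖y + Complex.I • x‖ := by
    rw [← neg_neg (Complex.I • f y), ← hI, ← sub_eq_add_neg, ← map_sub, f.norm_map,
      show y + Complex.I • x = Complex.I • (x - Complex.I • y) by
        simp [smul_smul, sub_eq_add_neg, add_comm],
      norm_smul]
    simp
  rw [inner_eq_sum_norm_sq_div_four, inner_eq_sum_norm_sq_div_four (𝕜 := ℂ) y x, ← map_add,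
    ← map_sub, f.norm_map, f.norm_map, add_comm x, norm_sub_rev x]
  exact congrArg (· / 4) (by rw [RCLike.I_to_complex, h₁, h₂])

variable [CompleteSpace F]

theorem exists_conjCLM_extension {ι : Type*} (g : ι → E) (g' : ι → F)
    (hg : Dense (span ℂ (Set.range g) : Set E)) (hg' : ∀ i j, ⟪g' i, g' j⟫ = ⟪g j, g i⟫) :
    ∃ Θ : E →L⋆[ℂ] F, ∀ i, Θ (g i) = g' i := by
  classical
  let S := Finsupp.linearCombination ℂ g
  let S' : (ι →₀ ℂ) →ₗ⋆[ℂ] F :=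
    { toFun := fun l => l.sum fun i c => starRingEnd ℂ c • g' i
      map_add' := fun l l' => Finsupp.sum_add_index' (by simp) (by simp [add_smul])
      map_smul' := fun c l => by simp [Finsupp.sum_smul_index', Finsupp.smul_sum, smul_smul] }
  -- `S'` has the same norm as `S`, so it factors isometrically through the range of `S`
  have hinner : ∀ l, ⟪S' l, S' l⟫ = ⟪S l, S l⟫ := by
    intro l
    simp only [S, S', LinearMap.coe_mk, AddHom.coe_mk, Finsupp.linearCombination_apply,
      Finsupp.sum, sum_inner, inner_sum, inner_smul_left, inner_smul_right, hg', Finset.mul_sum,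
      starRingEnd_self_apply]
    rw [Finset.sum_comm]
    exact Finset.sum_congr rfl fun i _ => Finset.sum_congr rfl fun j _ => by ring
  have hnorm : ∀ l, ‖S' l‖ ≤ 1 * ‖S l‖ := fun l => by
    rw [one_mul, ← sq_le_sq₀ (norm_nonneg _) (norm_nonneg _), @norm_sq_eq_re_inner ℂ,
      @norm_sq_eq_re_inner ℂ, hinner]
  have hdense : DenseRange S := by
    rw [DenseRange, ← LinearMap.coe_range, Finsupp.range_linearCombination]
    exact hg
  refine ⟨S'.extendOfNorm S, fun i => ?_⟩
  simpa [S, S'] using S'.extendOfNorm_eq hdense ⟨1, hnorm⟩ (Finsupp.single i 1)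

end ConjLinear

section Operators

variable {E : Type*} [NormedAddCommGroup E] [InnerProductSpace ℂ E]

theorem eq_of_inner_left_of_dense_span {s : Set E} (hs : Dense (span ℂ s : Set E)) {x y : E}
    (h : ∀ v ∈ s, ⟪x, v⟫ = ⟪y, v⟫) : x = y :=
  innerSL_inj.mp (ext_on hs h)

theorem ContinuousLinearMap.conj_mul {Θ : E →L⋆[ℂ] E} (hΘ : Θ.comp Θ = 1) (A B : E →L[ℂ] E) :
    (Θ.comp (A * B)).comp Θ = (Θ.comp A).comp Θ * (Θ.comp B).comp Θ := by
  ext x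
  simp [← comp_apply Θ Θ, hΘ]

theorem ContinuousLinearMap.conj_mul_conj {Θ Θ' : E →L⋆[ℂ] E} {S L L' : E →L[ℂ] E}
    (h : Θ.comp S = S.comp Θ') (h' : Θ'.comp S = S.comp Θ) (hL : (Θ'.comp L).comp Θ' = L') :
    (Θ.comp (S * L * S)).comp Θ = S * L' * S := by
  ext x
  simp [← hL, ← comp_apply Θ S, h, ← comp_apply S Θ, ← h']

variable [CompleteSpace E]

theorem ContinuousLinearMap.star_eq_of_dense_span {s : Set E} (hs : Dense (span ℂ s : Set E))
    {A B : E →L[ℂ] E} (h : ∀ x ∈ s, ∀ y ∈ s, ⟪B x, y⟫ = ⟪x, A y⟫) : star A = B :=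
  (ext_on hs fun x hx => eq_of_inner_left_of_dense_span hs fun y hy => by
    rw [h x hx y hy, star_eq_adjoint, adjoint_inner_left]).symm

theorem conj_mem_unitary (K : E →ₗᵢ⋆[ℂ] E) (hK : ∀ x, K (K x) = x) {U U' : E →L[ℂ] E}
    (hU : U ∈ unitary (E →L[ℂ] E)) (hU' : ∀ x, U' x = K (U (K x))) :
    U' ∈ unitary (E →L[ℂ] E) := by
  have hstar : ∀ x, star U' x = K (star U (K x)) := fun x => ext_inner_right ℂ fun v => by
    rw [star_eq_adjoint, adjoint_inner_left, hU', ← hK v, K.inner_map_map_of_conj, hK,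
      star_eq_adjoint, adjoint_inner_right, ← K.inner_map_map_of_conj, hK]
  constructor <;> ext x
  · simp [hstar, hU', hK, ← mul_apply_eq_comp (star U), Unitary.star_mul_self_of_mem hU]
  · simp [hstar, hU', hK, ← mul_apply_eq_comp U, Unitary.mul_star_self_of_mem hU]

end Operators

section TensorMap

variable {X Y Z : Type*} [NormedAddCommGroup X] [InnerProductSpace ℂ X]
  [NormedAddCommGroup Y] [InnerProductSpace ℂ Y] [NormedAddCommGroup Z] [InnerProductSpace ℂ Z]

/-- `μ` identifies `Z` with the Hilbert space tensor product `X ⊗ Y`, with `μ x y = x ⊗ y`. -/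
structure IsTensorMap (μ : X →L[ℂ] Y →L[ℂ] Z) : Prop where
  inner_apply_apply : ∀ x y x' y', ⟪μ x y, μ x' y'⟫ = ⟪x, x'⟫ * ⟪y, y'⟫
  dense_span : Dense (span ℂ (Set.range fun p : X × Y => μ p.1 p.2) : Set Z)

namespace IsTensorMap

theorem of_dense_span [CompleteSpace X] [CompleteSpace Z] {μ : X →L[ℂ] Y →L[ℂ] Z} {s : Set X}
    (hs : Dense (span ℂ s : Set X))
    (hinner : ∀ x ∈ s, ∀ x' ∈ s, ∀ y y', ⟪μ x y, μ x' y'⟫ = ⟪x, x'⟫ * ⟪y, y'⟫)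
    (hdense : Dense (span ℂ (Set.range fun p : X × Y => μ p.1 p.2) : Set Z)) : IsTensorMap μ := by
  refine ⟨fun x y x' y' => ?_, hdense⟩
  have hadj : (adjoint (μ.flip y')).comp (μ.flip y) = ⟪y', y⟫ • 1 :=
    ext_on hs fun x hx => eq_of_inner_left_of_dense_span hs fun x' hx' => by
      simp [adjoint_inner_left, hinner x hx x' hx']
  calc ⟪μ x y, μ x' y'⟫ = ⟪(adjoint (μ.flip y')).comp (μ.flip y) x, x'⟫ :=
        (adjoint_inner_left (μ.flip y') x' (μ x y)).symm
    _ = ⟪x, x'⟫ * ⟪y, y'⟫ := by simp [hadj]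

variable {μ : X →L[ℂ] Y →L[ℂ] Z}

theorem ext (hμ : IsTensorMap μ) {σ : ℂ →+* ℂ} {V : Type*} [TopologicalSpace V]
    [AddCommMonoid V] [Module ℂ V] [T2Space V] {S T : Z →SL[σ] V} (h : ∀ x y, S (μ x y) = T (μ x y)) : S = T :=
  ext_on hμ.dense_span (Set.forall_mem_range.2 fun p => h p.1 p.2)

variable {leg : (X →L[ℂ] X) → Z →L[ℂ] Z}

theorem leg_mul (hμ : IsTensorMap μ) (hleg : ∀ T x y, leg T (μ x y) = μ (T x) y)
    (S T : X →L[ℂ] X) : leg (S * T) = leg S * leg T :=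
  hμ.ext fun x y => by simp [hleg]

theorem leg_one (hμ : IsTensorMap μ) (hleg : ∀ T x y, leg T (μ x y) = μ (T x) y) : leg 1 = 1 :=
  hμ.ext fun x y => by simp [hleg]

theorem star_leg [CompleteSpace X] [CompleteSpace Z] (hμ : IsTensorMap μ)
    (hleg : ∀ T x y, leg T (μ x y) = μ (T x) y) (T : X →L[ℂ] X) : star (leg T) = leg (star T) := by
  refine star_eq_of_dense_span hμ.dense_span ?_
  simp only [Set.forall_mem_range]
  intro p q
  simp [hleg, hμ.inner_apply_apply, star_eq_adjoint, adjoint_inner_left]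

theorem leg_mem_unitary [CompleteSpace X] [CompleteSpace Z] (hμ : IsTensorMap μ)
    (hleg : ∀ T x y, leg T (μ x y) = μ (T x) y) {U : X →L[ℂ] X} (hU : U ∈ unitary (X →L[ℂ] X)) :
    leg U ∈ unitary (Z →L[ℂ] Z) := by
  simp only [Unitary.mem_iff, hμ.star_leg hleg, ← hμ.leg_mul hleg, Unitary.star_mul_self_of_mem hU,
    Unitary.mul_star_self_of_mem hU, hμ.leg_one hleg, and_self]

theorem conj_leg (hμ : IsTensorMap μ) (hleg : ∀ T x y, leg T (μ x y) = μ (T x) y)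
    {Θ : Z →L⋆[ℂ] Z} {K : X → X} {C : Y → Y} (hΘ : ∀ x y, Θ (μ x y) = μ (K x) (C y))
    (hC : ∀ y, C (C y) = y) {T T' : X →L[ℂ] X} (hT' : ∀ x, T' x = K (T (K x))) :
    (Θ.comp (leg T)).comp Θ = leg T' :=
  hμ.ext fun x y => by simp [hΘ, hleg, hC, hT']

theorem exists_conj [CompleteSpace Z] (hμ : IsTensorMap μ) (K : X →ₗᵢ⋆[ℂ] X)
    (C : Y →ₗᵢ⋆[ℂ] Y) : ∃ Θ : Z →L⋆[ℂ] Z, ∀ x y, Θ (μ x y) = μ (K x) (C y) := by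
  obtain ⟨Θ, hΘ⟩ := exists_conjCLM_extension (fun p : X × Y => μ p.1 p.2)
    (fun p => μ (K p.1) (C p.2)) hμ.dense_span fun p q => by
      simp [hμ.inner_apply_apply, LinearIsometry.inner_map_map_of_conj]
  exact ⟨Θ, fun x y => hΘ (x, y)⟩

end IsTensorMap

theorem apply_apply_eq_of_dense_span (μ : X →L[ℂ] Y →L[ℂ] Z) {s : Set X}
    (hs : Dense (span ℂ s : Set X)) {Θ : Z →L⋆[ℂ] Z} {K : X →L⋆[ℂ] X} {C : Y → Y}
    (h : ∀ x ∈ s, ∀ y, Θ (μ x y) = μ (K x) (C y)) (x : X) (y : Y) :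
    Θ (μ x y) = μ (K x) (C y) :=
  DFunLike.congr_fun (ext_on hs (f := Θ.comp (μ.flip y)) (g := (μ.flip (C y)).comp K)
    fun x hx => h x hx y) x

end TensorMap

section TripleTensor

variable {H H2 H3 : Type*} [NormedAddCommGroup H] [InnerProductSpace ℂ H]
  [NormedAddCommGroup H2] [InnerProductSpace ℂ H2] [NormedAddCommGroup H3] [InnerProductSpace ℂ H3]
  {τ : H →L[ℂ] H →L[ℂ] H2} {m : H2 →L[ℂ] H →L[ℂ] H3} {m' : H →L[ℂ] H2 →L[ℂ] H3}

theorem flip_mem_unitary [CompleteSpace H2] (hτ : IsTensorMap τ) {Sg : H2 →L[ℂ] H2}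
    (hSg : ∀ a b, Sg (τ a b) = τ b a) : Sg ∈ unitary (H2 →L[ℂ] H2) := by
  have hstar : star Sg = Sg := star_eq_of_dense_span hτ.dense_span <| by
    simp only [Set.forall_mem_range]
    intro p q
    simp [hSg, hτ.inner_apply_apply, mul_comm]
  have hSgSg : Sg * Sg = 1 := hτ.ext fun a b => by simp [hSg]
  exact ⟨by rw [hstar, hSgSg], by rw [hstar, hSgSg]⟩

theorem isTensorMap_of_elementary_dense (hminner : ∀ u v c d, ⟪m u c, m v d⟫ = ⟪u, v⟫ * ⟪c, d⟫)
    (hmdense : Dense (span ℂ (Set.range fun p : (H × H) × H => m (τ p.1.1 p.1.2) p.2) : Set H3)) :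
    IsTensorMap m := by
  refine ⟨fun u c v d => hminner u v c d, hmdense.mono (Submodule.span_mono ?_)⟩
  rintro _ ⟨⟨⟨a, b⟩, c⟩, rfl⟩
  exact ⟨(τ a b, c), rfl⟩

theorem isTensorMap_flip_of_assoc [CompleteSpace H2] [CompleteSpace H3] (hτ : IsTensorMap τ)
    (hminner : ∀ u v c d, ⟪m u c, m v d⟫ = ⟪u, v⟫ * ⟪c, d⟫)
    (hmm' : ∀ a b c, m (τ a b) c = m' a (τ b c))
    (hmdense : Dense (span ℂ (Set.range fun p : (H × H) × H => m (τ p.1.1 p.1.2) p.2) : Set H3)) :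
    IsTensorMap m'.flip := by
  refine IsTensorMap.of_dense_span hτ.dense_span ?_ (hmdense.mono (Submodule.span_mono ?_))
  · simp only [Set.forall_mem_range]
    rintro ⟨b, c⟩ ⟨b', c'⟩ a a'
    simp only [flip_apply, ← hmm', hminner, hτ.inner_apply_apply]
    ring
  · exact Set.range_subset_iff.2 fun p => ⟨(τ p.1.2 p.2, p.1.1), by simp [hmm']⟩

theorem exists_conj_tensor3 [CompleteSpace H3]
    (hτdense : Dense (span ℂ (Set.range fun p : H × H => τ p.1 p.2) : Set H2))
    (hm : IsTensorMap m) (hmm' : ∀ a b c, m (τ a b) c = m' a (τ b c))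
    (A B C : H →ₗᵢ⋆[ℂ] H) (K₁₂ K₂₃ : H2 →ₗᵢ⋆[ℂ] H2)
    (hK₁₂ : ∀ a b, K₁₂ (τ a b) = τ (A a) (B b)) (hK₂₃ : ∀ b c, K₂₃ (τ b c) = τ (B b) (C c)) :
    ∃ Θ : H3 →L⋆[ℂ] H3,
      (∀ u c, Θ (m u c) = m (K₁₂ u) (C c)) ∧ ∀ a v, Θ (m' a v) = m' (A a) (K₂₃ v) := by
  obtain ⟨Θ, hΘ⟩ := hm.exists_conj K₁₂ C
  refine ⟨Θ, hΘ, fun a v => apply_apply_eq_of_dense_span m'.flip hτdense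
    (K := K₂₃.toContinuousLinearMap) ?_ v a⟩
  simp only [Set.forall_mem_range]
  rintro ⟨b, c⟩ a
  simp [← hmm', hΘ, hK₁₂, hK₂₃]

theorem comp_flip_leg_eq_flip_leg_comp
    (hmdense : Dense (span ℂ (Set.range fun p : (H × H) × H => m (τ p.1.1 p.1.2) p.2) : Set H3))
    {Sg : H2 →L[ℂ] H2} (hSg : ∀ a b, Sg (τ a b) = τ b a) {S : H3 →L[ℂ] H3}
    (hS : ∀ u c, S (m u c) = m (Sg u) c) {A B C : H → H} {K K' : H2 → H2}
    (hK : ∀ a b, K (τ a b) = τ (A a) (B b)) (hK' : ∀ a b, K' (τ a b) = τ (B a) (A b))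
    {Θ Θ' : H3 →L⋆[ℂ] H3} (hΘ : ∀ u c, Θ (m u c) = m (K u) (C c))
    (hΘ' : ∀ u c, Θ' (m u c) = m (K' u) (C c)) :
    Θ.comp S = S.comp Θ' :=
  ext_on hmdense <| Set.forall_mem_range.2 fun p => by simp [hS, hSg, hΘ, hΘ', hK, hK']

end TripleTensor

theorem eq_of_pentagon {M : Type*} [Monoid M] [StarMul M] {a b c a' b' : M}
    (hc : c ∈ unitary M) (hb' : b' ∈ unitary M) (hpent : a * b * c = c * a)
    (hpent' : a' * b' * star c = star c * a') (hcomm : Commute b a') :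
    c * a * a' = a * a' * b * c * star b' := by
  have hpent'' : c * a' * b' = a' * c := by
    calc c * a' * b' = c * (a' * b' * star c) * c := by
          simp [mul_assoc, Unitary.star_mul_self_of_mem hc]
      _ = a' * c := by simp [hpent', ← mul_assoc, Unitary.mul_star_self_of_mem hc]
  calc c * a * a' = a * b * c * a' := by rw [hpent]
    _ = a * b * (c * a' * b') * star b' := by simp [mul_assoc, Unitary.mul_star_self_of_mem hb']
    _ = a * a' * b * c * star b' := by
      rw [hpent'', ← mul_assoc, mul_assoc a, hcomm.eq]
      simp [mul_assoc]

theorem stmt_9_general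
    {H H2 H3 : Type*}
    [NormedAddCommGroup H] [InnerProductSpace ℂ H] [CompleteSpace H]
    [NormedAddCommGroup H2] [InnerProductSpace ℂ H2] [CompleteSpace H2]
    [NormedAddCommGroup H3] [InnerProductSpace ℂ H3] [CompleteSpace H3]
    -- the tensor map H × H → H ⊗ H = H2
    (τ : H →L[ℂ] H →L[ℂ] H2)
    (hτinner : ∀ a b c d : H, (inner ℂ (τ a b) (τ c d) : ℂ) = (inner ℂ a c : ℂ) * (inner ℂ b d : ℂ))
    (hτdense : Dense (Submodule.span ℂ (Set.range fun p : H × H => τ p.1 p.2) : Set H2))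
    -- the tensor maps (H ⊗ H) × H → H ⊗ H ⊗ H = H3 and H × (H ⊗ H) → H ⊗ H ⊗ H
    (m : H2 →L[ℂ] H →L[ℂ] H3)
    (m' : H →L[ℂ] H2 →L[ℂ] H3)
    (hmm' : ∀ a b c : H, m (τ a b) c = m' a (τ b c))
    (hminner : ∀ (u v : H2) (c d : H), (inner ℂ (m u c) (m v d) : ℂ) = (inner ℂ u v : ℂ) * (inner ℂ c d : ℂ))
    (hmdense : Dense (Submodule.span ℂ (Set.range fun p : (H × H) × H => m (τ p.1.1 p.1.2) p.2) : Set H3))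
    -- the leg maps T ↦ T₁₂ = T ⊗ 1, T ↦ T₂₃ = 1 ⊗ T, T ↦ T₁₃ = (Σ⊗1)(1⊗T)(Σ⊗1)
    (leg12 leg23 leg13 : (H2 →L[ℂ] H2) → (H3 →L[ℂ] H3))
    (hleg12 : ∀ (T : H2 →L[ℂ] H2) (u : H2) (c : H), leg12 T (m u c) = m (T u) c)
    (hleg23 : ∀ (T : H2 →L[ℂ] H2) (a : H) (v : H2), leg23 T (m' a v) = m' a (T v))
    -- the flip unitary Σ on H ⊗ H
    (Sg : H2 →L[ℂ] H2)
    (hSg : ∀ a b : H, Sg (τ a b) = τ b a)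
    (hleg13 : ∀ T : H2 →L[ℂ] H2, leg13 T = leg12 Sg * leg23 T * leg12 Sg)
    -- the multiplicative unitary W, satisfying the pentagonal equation
    (W : H2 →L[ℂ] H2)
    (hWl : W * star W = 1) (hWr : star W * W = 1)
    (hPent : leg12 W * leg13 W * leg23 W = leg23 W * leg12 W)
    -- J : a conjugate-linear isometric involution of H
    (J : H → H)
    (hJadd : ∀ x y : H, J (x + y) = J x + J y)
    (hJsmul : ∀ (c : ℂ) (x : H), J (c • x) = (starRingEnd ℂ) c • J x)
    (hJnorm : ∀ x : H, ‖J x‖ = ‖x‖)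
    (hJinv : ∀ x : H, J (J x) = x)
    -- Jh : a conjugate-linear isometric involution of H
    (Jh : H → H)
    (hJhadd : ∀ x y : H, Jh (x + y) = Jh x + Jh y)
    (hJhsmul : ∀ (c : ℂ) (x : H), Jh (c • x) = (starRingEnd ℂ) c • Jh x)
    (hJhnorm : ∀ x : H, ‖Jh x‖ = ‖x‖)
    (hJhinv : ∀ x : H, Jh (Jh x) = x)
    -- JJ : the conjugate-linear involution J⊗J of H ⊗ H
    (JJ : H2 → H2)
    (hJJadd : ∀ x y : H2, JJ (x + y) = JJ x + JJ y)
    (hJJsmul : ∀ (c : ℂ) (x : H2), JJ (c • x) = (starRingEnd ℂ) c • JJ x)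
    (hJJnorm : ∀ x : H2, ‖JJ x‖ = ‖x‖)
    (hJJinv : ∀ x : H2, JJ (JJ x) = x)
    (hJJtmul : ∀ a b : H, JJ (τ a b) = τ (J a) (J b))
    -- JJh : the conjugate-linear involution J⊗Ĵ of H ⊗ H
    (JJh : H2 → H2)
    (hJJhadd : ∀ x y : H2, JJh (x + y) = JJh x + JJh y)
    (hJJhsmul : ∀ (c : ℂ) (x : H2), JJh (c • x) = (starRingEnd ℂ) c • JJh x)
    (hJJhnorm : ∀ x : H2, ‖JJh x‖ = ‖x‖)
    (hJJhtmul : ∀ a b : H, JJh (τ a b) = τ (J a) (Jh b))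
    -- JhJ : the conjugate-linear involution Ĵ⊗J of H ⊗ H
    (JhJ : H2 → H2)
    (hJhJadd : ∀ x y : H2, JhJ (x + y) = JhJ x + JhJ y)
    (hJhJsmul : ∀ (c : ℂ) (x : H2), JhJ (c • x) = (starRingEnd ℂ) c • JhJ x)
    (hJhJnorm : ∀ x : H2, ‖JhJ x‖ = ‖x‖)
    (hJhJtmul : ∀ a b : H, JhJ (τ a b) = τ (Jh a) (J b))
    -- the assumption W* = (Ĵ⊗J) W (Ĵ⊗J)
    (hWstar : ∀ x : H2, (star W) x = JhJ (W (JhJ x)))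
    -- W' = (J⊗J) W (J⊗J), the commutant multiplicative unitary
    (W' : H2 →L[ℂ] H2)
    (hW' : ∀ x : H2, W' x = JJ (W (JJ x)))
    -- W'' = (J⊗Ĵ) W (J⊗Ĵ) (in the quantum group setting, W'' = (W'ᵒᵖ)*)
    (W'' : H2 →L[ℂ] H2)
    (hW'' : ∀ x : H2, W'' x = JJh (W (JJh x)))
    -- W₁₃ commutes with W''₁₂
    (hcomm : Commute (leg13 W) (leg12 W'')) :
    leg23 W * leg12 W * leg12 W'' =
      leg12 W * leg12 W'' * leg13 W * leg23 W * star (leg13 W') := by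
  let Jᵢ := conjLinearIsometry J hJadd hJsmul hJnorm
  let Jhᵢ := conjLinearIsometry Jh hJhadd hJhsmul hJhnorm
  let JJᵢ := conjLinearIsometry JJ hJJadd hJJsmul hJJnorm
  let JJhᵢ := conjLinearIsometry JJh hJJhadd hJJhsmul hJJhnorm
  let JhJᵢ := conjLinearIsometry JhJ hJhJadd hJhJsmul hJhJnorm
  have hτ : IsTensorMap τ := ⟨hτinner, hτdense⟩
  have hm : IsTensorMap m := isTensorMap_of_elementary_dense hminner hmdense
  have hm' : IsTensorMap m'.flip := isTensorMap_flip_of_assoc hτ hminner hmm' hmdense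
  have hleg23' : ∀ T v a, leg23 T (m'.flip v a) = m'.flip (T v) a := fun T v a => hleg23 T a v
  obtain ⟨Θ, hΘm, hΘm'⟩ :=
    exists_conj_tensor3 hτdense hm hmm' Jᵢ Jhᵢ Jᵢ JJhᵢ JhJᵢ hJJhtmul hJhJtmul
  obtain ⟨Θ', hΘ'm, hΘ'm'⟩ :=
    exists_conj_tensor3 hτdense hm hmm' Jhᵢ Jᵢ Jᵢ JhJᵢ JJᵢ hJhJtmul hJJtmul
  have hΘΘ : Θ.comp Θ = 1 := ext_on hmdense <| Set.forall_mem_range.2 fun p => by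
    simp [Jᵢ, JJhᵢ, hΘm, hJJhtmul, hJinv, hJhinv]
  have h12 : (Θ.comp (leg12 W)).comp Θ = leg12 W'' := hm.conj_leg hleg12 hΘm hJinv hW''
  have h23 : (Θ.comp (leg23 W)).comp Θ = star (leg23 W) := by
    rw [hm'.star_leg hleg23']
    exact hm'.conj_leg hleg23' (fun v a => hΘm' a v) hJinv hWstar
  -- `Σ₁₂` intertwines `Θ = J ⊗ Ĵ ⊗ J` with `Θ' = Ĵ ⊗ J ⊗ J`
  have h13 : (Θ.comp (leg13 W)).comp Θ = leg13 W' := by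
    rw [hleg13, hleg13]
    exact conj_mul_conj (comp_flip_leg_eq_flip_leg_comp hmdense hSg (hleg12 Sg) hJJhtmul hJhJtmul hΘm hΘ'm)
      (comp_flip_leg_eq_flip_leg_comp hmdense hSg (hleg12 Sg) hJhJtmul hJJhtmul hΘ'm hΘm)
      (hm'.conj_leg hleg23' (fun v a => hΘ'm' a v) hJhinv hW')
  have hSg₁₂ := hm.leg_mem_unitary hleg12 (flip_mem_unitary hτ hSg)
  have hW'₂₃ := hm'.leg_mem_unitary hleg23' (conj_mem_unitary JJᵢ hJJinv ⟨hWr, hWl⟩ hW')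
  refine eq_of_pentagon (hm'.leg_mem_unitary hleg23' ⟨hWr, hWl⟩) ?_ hPent ?_ hcomm
  · rw [hleg13]
    exact mul_mem (mul_mem hSg₁₂ hW'₂₃) hSg₁₂
  · simpa only [conj_mul hΘΘ, h12, h13, h23] using congrArg (fun X => (Θ.comp X).comp Θ) hPent

theorem stmt_9
    {H H2 H3 : Type*}
    [NormedAddCommGroup H] [InnerProductSpace ℂ H] [CompleteSpace H]
    [NormedAddCommGroup H2] [InnerProductSpace ℂ H2] [CompleteSpace H2]
    [NormedAddCommGroup H3] [InnerProductSpace ℂ H3] [CompleteSpace H3]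
    -- the tensor map H × H → H ⊗ H = H2
    (τ : H →L[ℂ] H →L[ℂ] H2)
    (hτinner : ∀ a b c d : H, (inner ℂ (τ a b) (τ c d) : ℂ) = (inner ℂ a c : ℂ) * (inner ℂ b d : ℂ))
    (hτdense : Dense (Submodule.span ℂ (Set.range fun p : H × H => τ p.1 p.2) : Set H2))
    -- the tensor maps (H ⊗ H) × H → H ⊗ H ⊗ H = H3 and H × (H ⊗ H) → H ⊗ H ⊗ H
    (m : H2 →L[ℂ] H →L[ℂ] H3)
    (m' : H →L[ℂ] H2 →L[ℂ] H3)
    (hmm' : ∀ a b c : H, m (τ a b) c = m' a (τ b c))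
    (hminner : ∀ (u v : H2) (c d : H), (inner ℂ (m u c) (m v d) : ℂ) = (inner ℂ u v : ℂ) * (inner ℂ c d : ℂ))
    (hmdense : Dense (Submodule.span ℂ (Set.range fun p : (H × H) × H => m (τ p.1.1 p.1.2) p.2) : Set H3))
    -- the leg maps T ↦ T₁₂ = T ⊗ 1, T ↦ T₂₃ = 1 ⊗ T, T ↦ T₁₃ = (Σ⊗1)(1⊗T)(Σ⊗1)
    (leg12 leg23 leg13 : (H2 →L[ℂ] H2) → (H3 →L[ℂ] H3))
    (hleg12 : ∀ (T : H2 →L[ℂ] H2) (u : H2) (c : H), leg12 T (m u c) = m (T u) c)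
    (hleg23 : ∀ (T : H2 →L[ℂ] H2) (a : H) (v : H2), leg23 T (m' a v) = m' a (T v))
    -- the flip unitary Σ on H ⊗ H
    (Sg : H2 →L[ℂ] H2)
    (hSg : ∀ a b : H, Sg (τ a b) = τ b a)
    (hleg13 : ∀ T : H2 →L[ℂ] H2, leg13 T = leg12 Sg * leg23 T * leg12 Sg)
    -- the multiplicative unitary W, satisfying the pentagonal equation
    (W : H2 →L[ℂ] H2)
    (hWl : W * star W = 1) (hWr : star W * W = 1)
    (hPent : leg12 W * leg13 W * leg23 W = leg23 W * leg12 W)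
    -- J : a conjugate-linear isometric involution of H
    (J : H → H)
    (hJadd : ∀ x y : H, J (x + y) = J x + J y)
    (hJsmul : ∀ (c : ℂ) (x : H), J (c • x) = (starRingEnd ℂ) c • J x)
    (hJnorm : ∀ x : H, ‖J x‖ = ‖x‖)
    (hJinv : ∀ x : H, J (J x) = x)
    -- Jh : a conjugate-linear isometric involution of H
    (Jh : H → H)
    (hJhadd : ∀ x y : H, Jh (x + y) = Jh x + Jh y)
    (hJhsmul : ∀ (c : ℂ) (x : H), Jh (c • x) = (starRingEnd ℂ) c • Jh x)
    (hJhnorm : ∀ x : H, ‖Jh x‖ = ‖x‖)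
    (hJhinv : ∀ x : H, Jh (Jh x) = x)
    -- JJ : the conjugate-linear involution J⊗J of H ⊗ H
    (JJ : H2 → H2)
    (hJJadd : ∀ x y : H2, JJ (x + y) = JJ x + JJ y)
    (hJJsmul : ∀ (c : ℂ) (x : H2), JJ (c • x) = (starRingEnd ℂ) c • JJ x)
    (hJJnorm : ∀ x : H2, ‖JJ x‖ = ‖x‖)
    (hJJinv : ∀ x : H2, JJ (JJ x) = x)
    (hJJtmul : ∀ a b : H, JJ (τ a b) = τ (J a) (J b))
    -- JJh : the conjugate-linear involution J⊗Ĵ of H ⊗ H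
    (JJh : H2 → H2)
    (hJJhadd : ∀ x y : H2, JJh (x + y) = JJh x + JJh y)
    (hJJhsmul : ∀ (c : ℂ) (x : H2), JJh (c • x) = (starRingEnd ℂ) c • JJh x)
    (hJJhnorm : ∀ x : H2, ‖JJh x‖ = ‖x‖)
    (hJJhinv : ∀ x : H2, JJh (JJh x) = x)
    (hJJhtmul : ∀ a b : H, JJh (τ a b) = τ (J a) (Jh b))
    -- JhJ : the conjugate-linear involution Ĵ⊗J of H ⊗ H
    (JhJ : H2 → H2)
    (hJhJadd : ∀ x y : H2, JhJ (x + y) = JhJ x + JhJ y)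
    (hJhJsmul : ∀ (c : ℂ) (x : H2), JhJ (c • x) = (starRingEnd ℂ) c • JhJ x)
    (hJhJnorm : ∀ x : H2, ‖JhJ x‖ = ‖x‖)
    (hJhJinv : ∀ x : H2, JhJ (JhJ x) = x)
    (hJhJtmul : ∀ a b : H, JhJ (τ a b) = τ (Jh a) (J b))
    -- the assumption W* = (Ĵ⊗J) W (Ĵ⊗J)
    (hWstar : ∀ x : H2, (star W) x = JhJ (W (JhJ x)))
    -- W' = (J⊗J) W (J⊗J), the commutant multiplicative unitary
    (W' : H2 →L[ℂ] H2)
    (hW' : ∀ x : H2, W' x = JJ (W (JJ x)))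
    -- W'' = (J⊗Ĵ) W (J⊗Ĵ) (in the quantum group setting, W'' = (W'ᵒᵖ)*)
    (W'' : H2 →L[ℂ] H2)
    (hW'' : ∀ x : H2, W'' x = JJh (W (JJh x)))
    -- W₁₃ commutes with W''₁₂
    (hcomm : Commute (leg13 W) (leg12 W'')) :
    leg23 W * leg12 W * leg12 W'' =
      leg12 W * leg12 W'' * leg13 W * leg23 W * star (leg13 W') :=
  stmt_9_general τ hτinner hτdense m m' hmm' hminner hmdense leg12 leg23 leg13 hleg12 hleg23 Sg hSg
    hleg13 W hWl hWr hPent J hJadd hJsmul hJnorm hJinv Jh hJhadd hJhsmul hJhnorm hJhinv JJ hJJadd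
    hJJsmul hJJnorm hJJinv hJJtmul JJh hJJhadd hJJhsmul hJJhnorm hJJhtmul JhJ hJhJadd hJhJsmul
    hJhJnorm hJhJtmul hWstar W' hW' W'' hW'' hcomm
end
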